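/- arXiv:2412.20775 — 7 statements merged into one kernel-verified Lean document; each statement's English description precedes it below -/
import Mathlib

section
/- Let q ≥ 2 be a natural number. The star graph K_{1,q} is determined by its adjacency spectrum if and only if q is a prime number. -/
/-!
A graph consisting of `K_{s,t}` and isolated vertices, `n` vertices in all, has characteristic
polynomial `x^(n-2) (x^2 - s t)`; the star `K_{1,q}` is the case `n = q + 1`, `s t = q`.

If `q = a b` with `a, b ≥ 2`, then `K_{a,b}` plus `q + 1 - a - b` isolated vertices is
cospectral with the star, but all its degrees are at most `max a b < q`.

Conversely, a graph cospectral with the star has `0` as an eigenvalue of multiplicity `q - 1`,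
so its (symmetric) adjacency matrix has rank `2`. If `u ~ v`, the rows of `u` and `v` then span
all rows, and reading off coordinates shows the graph is complete bipartite between the
neighbourhoods of `v` and of `u`, plus isolated vertices. Comparing characteristic polynomials
gives `s t = q`, so for prime `q` the parts have sizes `1` and `q` and cover all `q + 1`
vertices.
-/

open Polynomial

instance completeBipartiteGraph.decidableRelAdj {V W : Type*} :
    DecidableRel (completeBipartiteGraph V W).Adj := fun v w => by
  cases v <;> cases w <;> simp [completeBipartiteGraph] <;> infer_instance

open Finset Matrix

namespace Matrix

theorem IsHermitian.rank_eq_card_sub_rootMultiplicity {n 𝕜 : Type*} [Fintype n] [DecidableEq n]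
    [RCLike 𝕜] {A : Matrix n n 𝕜} (hA : A.IsHermitian) :
    A.rank = Fintype.card n - A.charpoly.rootMultiplicity 0 := by
  have hzero : A.charpoly.rootMultiplicity 0 = Fintype.card {i // hA.eigenvalues i = 0} := by
    rw [← count_roots, hA.roots_charpoly_eq_eigenvalues, Multiset.count_map,
      Fintype.card_subtype, Finset.card_def, Finset.filter_val]
    congr! 3 with i
    simp [eq_comm (a := (0 : 𝕜))]
  rw [hA.rank_eq_card_non_zero_eigs, hzero, Fintype.card_subtype_compl]

theorem row_mem_span_range_of_rank_le {m n ι K : Type*} [Fintype m] [Fintype n] [Fintype ι]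
    [Field K] {M : Matrix m n K} {f : ι → m} (hf : LinearIndependent K (M.row ∘ f))
    (hrank : M.rank ≤ Fintype.card ι) (w : m) :
    M.row w ∈ Submodule.span K (Set.range (M.row ∘ f)) := by
  have hle : Submodule.span K (Set.range (M.row ∘ f)) ≤ Submodule.span K (Set.range M.row) :=
    Submodule.span_mono (Set.range_comp_subset_range f M.row)
  rw [Submodule.eq_of_le_of_finrank_le hle
    (by rwa [finrank_span_eq_card hf, ← rank_eq_finrank_span_row])]
  exact Submodule.subset_span ⟨w, rfl⟩

end Matrix

theorem Polynomial.rootMultiplicity_zero_eq_of_X_sq_mul_eq {R : Type*} [CommRing R] [IsDomain R]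
    {p : R[X]} {n : ℕ} {c : R} (hc : c ≠ 0) (h : X ^ 2 * p = X ^ n * (X ^ 2 - C c)) :
    p.rootMultiplicity 0 = n - 2 := by
  have hq : (X ^ 2 - C c : R[X]).rootMultiplicity 0 = 0 :=
    rootMultiplicity_eq_zero (by simp [hc])
  have hne : X ^ n * (X ^ 2 - C c) ≠ 0 :=
    mul_ne_zero (pow_ne_zero _ X_ne_zero) fun h0 => hc (by simpa using congrArg (eval 0) h0)
  have hX (k : ℕ) : (X ^ k : R[X]).rootMultiplicity 0 = k := by
    simpa using rootMultiplicity_X_sub_C_pow (0 : R) k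
  have := congrArg (rootMultiplicity 0) h
  rw [rootMultiplicity_mul (h ▸ hne), rootMultiplicity_mul hne, hX, hX, hq] at this
  omega

theorem Finset.exists_disjoint_card_eq {α : Type*} [Fintype α] [DecidableEq α] {s t : ℕ}
    (h : s + t ≤ Fintype.card α) : ∃ S T : Finset α, Disjoint S T ∧ #S = s ∧ #T = t := by
  obtain ⟨U, -, hU⟩ := exists_subset_card_eq (s := (univ : Finset α)) (n := s + t) (by simpa)
  obtain ⟨T, hTU, hT⟩ := exists_subset_card_eq (s := U) (n := t) (by omega)
  exact ⟨U \ T, T, sdiff_disjoint, by rw [card_sdiff_of_subset hTU]; omega, hT⟩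

namespace SimpleGraph

variable {V : Type*} {G : SimpleGraph V} {S T : Finset V}

def IsCompleteBipartiteOn (G : SimpleGraph V) (S T : Finset V) : Prop :=
  ∀ x y, G.Adj x y ↔ x ∈ S ∧ y ∈ T ∨ x ∈ T ∧ y ∈ S

theorem isCompleteBipartiteOn_fromRel (hST : Disjoint S T) :
    (fromRel fun x y => x ∈ S ∧ y ∈ T).IsCompleteBipartiteOn S T := by
  intro x y
  have := Finset.disjoint_left.1 hST
  simp only [fromRel_adj]
  grind

theorem isCompleteBipartiteOn_completeBipartiteGraph {α β : Type*} [Fintype α] [Fintype β] :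
    (completeBipartiteGraph α β).IsCompleteBipartiteOn (univ.map .inl) (univ.map .inr) := by
  rintro (a | b) (a' | b') <;> simp

namespace IsCompleteBipartiteOn

theorem symm (h : G.IsCompleteBipartiteOn S T) : G.IsCompleteBipartiteOn T S :=
  fun x y => (h x y).trans or_comm

theorem disjoint (h : G.IsCompleteBipartiteOn S T) : Disjoint S T :=
  Finset.disjoint_left.2 fun _ hS hT => G.irrefl ((h _ _).2 (.inl ⟨hS, hT⟩))

section Degree

variable [Fintype V] [DecidableEq V] [DecidableRel G.Adj]

theorem neighborFinset_eq (h : G.IsCompleteBipartiteOn S T) (v : V) :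
    G.neighborFinset v = if v ∈ S then T else if v ∈ T then S else ∅ := by
  have hST := Finset.disjoint_left.1 h.disjoint
  ext w
  split_ifs <;> simp_all [h v w]

theorem degree_of_mem_left (h : G.IsCompleteBipartiteOn S T) {v : V} (hv : v ∈ S) :
    G.degree v = #T := by
  rw [← card_neighborFinset_eq_degree, h.neighborFinset_eq, if_pos hv]

theorem degree_le (h : G.IsCompleteBipartiteOn S T) (v : V) : G.degree v ≤ max #S #T := by
  rw [← card_neighborFinset_eq_degree, h.neighborFinset_eq]
  split_ifs <;> simp

end Degree

theorem charpoly_adjMatrix [Fintype V] [DecidableEq V] [DecidableRel G.Adj] (R : Type*)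
    [CommRing R] [Nontrivial R] (h : G.IsCompleteBipartiteOn S T) :
    X ^ 2 * (G.adjMatrix R).charpoly = X ^ Fintype.card V * (X ^ 2 - C (#S * #T : R)) := by
  -- `A = Pᵀ Q` factors through `Fin 2`, and `charpoly_mul_comm'` trades it for the `2 × 2`
  -- matrix `Q Pᵀ`.
  let ind (U : Finset V) : V → R := fun x => if x ∈ U then 1 else 0
  let P : Matrix (Fin 2) V R := of ![ind S, ind T]
  let Q : Matrix (Fin 2) V R := of ![ind T, ind S]
  have hST := Finset.disjoint_left.1 h.disjoint
  have hA : G.adjMatrix R = Pᵀ * Q := by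
    ext x y
    by_cases hxS : x ∈ S <;> by_cases hxT : x ∈ T <;> by_cases hyS : y ∈ S <;>
      by_cases hyT : y ∈ T <;> simp_all [P, Q, ind, mul_apply, h x y]
  have hQP : Q * Pᵀ = !![0, (#T : R); #S, 0] := by
    ext i j
    fin_cases i <;> fin_cases j <;>
      simp [P, Q, ind, mul_apply, Finset.inter_comm, disjoint_iff_inter_eq_empty.mp h.disjoint]
  have hcomm := charpoly_mul_comm' Pᵀ Q
  rw [Fintype.card_fin] at hcomm
  rw [hA, hcomm, hQP, charpoly_fin_two]
  simp [trace_fin_two, det_fin_two, sub_eq_add_neg, mul_comm]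

theorem nonempty_iso_completeBipartiteGraph [Fintype V] [DecidableEq V] {α β : Type*}
    [Fintype α] [Fintype β] (h : G.IsCompleteBipartiteOn S T) (hcard : #S + #T = Fintype.card V)
    (hS : #S = Fintype.card α) (hT : #T = Fintype.card β) :
    Nonempty (G ≃g completeBipartiteGraph α β) := by
  have hcover : S ∪ T = univ :=
    eq_univ_of_card _ (by rw [card_union_of_disjoint h.disjoint, hcard])
  let e : S ⊕ T ≃ V := (Equiv.Finset.union S T h.disjoint).trans
    (Equiv.subtypeUnivEquiv fun x => hcover ▸ mem_univ x)
  have hST := Finset.disjoint_left.1 h.disjoint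
  have hTS := Finset.disjoint_right.1 h.disjoint
  let φ : completeBipartiteGraph S T ≃g G := ⟨e, by
    rintro (⟨x, hx⟩ | ⟨x, hx⟩) (⟨y, hy⟩ | ⟨y, hy⟩) <;> simp_all [e, h x y]⟩
  exact ⟨φ.symm.trans (completeBipartiteGraphCongr
    (Fintype.equivOfCardEq (by simpa using hS)) (Fintype.equivOfCardEq (by simpa using hT)))⟩

end IsCompleteBipartiteOn

theorem adj_iff_of_rank_adjMatrix_le_two {K : Type*} [Field K] [CharZero K] [Fintype V]
    [DecidableRel G.Adj] (hrank : (G.adjMatrix K).rank ≤ 2) {u v : V} (huv : G.Adj u v)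
    (w x : V) : G.Adj w x ↔ G.Adj w v ∧ G.Adj u x ∨ G.Adj w u ∧ G.Adj v x := by
  set A := G.adjMatrix K
  have hli : LinearIndependent K (A.row ∘ ![u, v]) := by
    refine Fintype.linearIndependent_iff.2 fun g hg => Fin.forall_fin_two.2 ⟨?_, ?_⟩
    · simpa [Fin.sum_univ_two, A, huv, huv.symm] using congrFun hg v
    · simpa [Fin.sum_univ_two, A, huv, huv.symm] using congrFun hg u
  obtain ⟨c, hc⟩ := (Submodule.mem_span_range_iff_exists_fun K).1
    (row_mem_span_range_of_rank_le hli (by simpa using hrank) w)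
  have hc₀ : c 0 = A w v := by simpa [Fin.sum_univ_two, A, huv, huv.symm] using congrFun hc v
  have hc₁ : c 1 = A w u := by simpa [Fin.sum_univ_two, A, huv, huv.symm] using congrFun hc u
  have hx : A w x = A w v * A u x + A w u * A v x := by
    simpa [Fin.sum_univ_two, hc₀, hc₁] using (congrFun hc x).symm
  simp only [A, adjMatrix_apply] at hx
  by_cases hux : G.Adj u x <;> by_cases hvx : G.Adj v x <;> by_cases hwu : G.Adj w u <;>
    by_cases hwv : G.Adj w v <;> by_cases hwx : G.Adj w x <;> simp_all [one_add_one_eq_two]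

theorem exists_isCompleteBipartiteOn_of_rank_adjMatrix_le_two {K : Type*} [Field K] [CharZero K]
    [Fintype V] [DecidableRel G.Adj] (hrank : (G.adjMatrix K).rank ≤ 2) :
    ∃ S T : Finset V, G.IsCompleteBipartiteOn S T := by
  by_cases hG : ∃ u v, G.Adj u v
  · obtain ⟨u, v, huv⟩ := hG
    refine ⟨univ.filter (G.Adj · v), univ.filter (G.Adj · u), fun w x => ?_⟩
    simp [adj_iff_of_rank_adjMatrix_le_two hrank huv w x, G.adj_comm _ x]
  · exact ⟨∅, ∅, fun x y => by simpa using fun h => hG ⟨x, y, h⟩⟩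

theorem exists_isCompleteBipartiteOn_of_charpoly_adjMatrix [Fintype V] [DecidableEq V]
    [DecidableRel G.Adj] {c : ℕ} (hc : c ≠ 0)
    (hχ : X ^ 2 * (G.adjMatrix ℝ).charpoly = X ^ Fintype.card V * (X ^ 2 - C (c : ℝ))) :
    ∃ S T : Finset V, G.IsCompleteBipartiteOn S T ∧ #S * #T = c := by
  have hrank : (G.adjMatrix ℝ).rank ≤ 2 := by
    rw [(isHermitian_iff_isSymm.2 (isSymm_adjMatrix G)).rank_eq_card_sub_rootMultiplicity,
      Polynomial.rootMultiplicity_zero_eq_of_X_sq_mul_eq (by exact_mod_cast hc) hχ]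
    omega
  obtain ⟨S, T, h⟩ := exists_isCompleteBipartiteOn_of_rank_adjMatrix_le_two hrank
  have hST := (h.charpoly_adjMatrix ℝ).symm.trans hχ
  exact ⟨S, T, h, by
    exact_mod_cast C_inj.1 (sub_right_injective (mul_left_cancel₀ (pow_ne_zero _ X_ne_zero) hST))⟩

theorem exists_isCompleteBipartiteOn [Fintype V] [DecidableEq V] {s t : ℕ}
    (h : s + t ≤ Fintype.card V) :
    ∃ (G : SimpleGraph V) (S T : Finset V), G.IsCompleteBipartiteOn S T ∧ #S = s ∧ #T = t := by
  obtain ⟨S, T, hST, hS, hT⟩ := Finset.exists_disjoint_card_eq h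
  exact ⟨_, S, T, isCompleteBipartiteOn_fromRel hST, hS, hT⟩

section CompleteBipartiteGraph

variable (α β : Type*) [Fintype α] [Fintype β] [DecidableEq α] [DecidableEq β]

theorem degree_completeBipartiteGraph_inl (a : α) :
    (completeBipartiteGraph α β).degree (.inl a) = Fintype.card β := by
  rw [isCompleteBipartiteOn_completeBipartiteGraph.degree_of_mem_left (v := .inl a) (by simp),
    card_map, card_univ]

theorem charpoly_adjMatrix_completeBipartiteGraph (R : Type*) [CommRing R] [Nontrivial R] :
    X ^ 2 * ((completeBipartiteGraph α β).adjMatrix R).charpoly =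
      X ^ (Fintype.card α + Fintype.card β) *
        (X ^ 2 - C (Fintype.card α * Fintype.card β : R)) := by
  simpa using (isCompleteBipartiteOn_completeBipartiteGraph (α := α) (β := β)).charpoly_adjMatrix R

end CompleteBipartiteGraph

end SimpleGraph

open SimpleGraph

/-- The star graph `K_{1,q}` (with `q ≥ 2`) is determined by its adjacency spectrum
if and only if `q` is prime. -/
theorem starGraph_DS_iff_prime (q : ℕ) (hq : 2 ≤ q) :
    (∀ (V : Type) (_ : Fintype V) (_ : DecidableEq V) (H : SimpleGraph V)
      (_ : DecidableRel H.Adj),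
      (H.adjMatrix ℝ).charpoly =
          ((completeBipartiteGraph (Fin 1) (Fin q)).adjMatrix ℝ).charpoly →
        Nonempty (H ≃g completeBipartiteGraph (Fin 1) (Fin q))) ↔ q.Prime := by
  have hK := charpoly_adjMatrix_completeBipartiteGraph (Fin 1) (Fin q) ℝ
  simp only [Fintype.card_fin, Nat.cast_one, one_mul] at hK
  constructor
  · intro hDS
    by_contra hq'
    obtain ⟨a, ⟨b, rfl⟩, ha, hab⟩ := Nat.exists_dvd_of_not_prime2 hq hq'
    have hb : 2 ≤ b := by nlinarith
    classical
    obtain ⟨H, S, T, hH, hS, hT⟩ :=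
      exists_isCompleteBipartiteOn (V := Fin (1 + a * b)) (s := a) (t := b) (by simp; nlinarith)
    obtain ⟨φ⟩ := hDS _ _ _ H inferInstance <| mul_left_cancel₀ (pow_ne_zero 2 X_ne_zero) <| by
      rw [hH.charpoly_adjMatrix ℝ, hK, hS, hT, Fintype.card_fin]; simp
    have hdeg := (φ.symm.toCopy.degree_le (.inl 0)).trans (hH.degree_le _)
    rw [degree_completeBipartiteGraph_inl, Fintype.card_fin, hS, hT] at hdeg
    exact hdeg.not_gt (max_lt (by nlinarith) (by nlinarith))
  · intro hp V _ _ H _ hχ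
    have hcard : Fintype.card V = 1 + q := by simpa using congrArg natDegree hχ
    obtain ⟨S, T, hH, hST⟩ :=
      exists_isCompleteBipartiteOn_of_charpoly_adjMatrix hp.ne_zero (by rwa [hχ, hcard])
    rcases Nat.prime_mul_iff.1 (hST ▸ hp) with ⟨-, hT⟩ | ⟨-, hS⟩
    · rw [hT, mul_one] at hST
      exact hH.symm.nonempty_iso_completeBipartiteGraph (by omega) (by simp [hT]) (by simp [hST])
    · rw [hS, one_mul] at hST
      exact hH.nonempty_iso_completeBipartiteGraph (by omega) (by simp [hS]) (by simp [hST])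
end

section
/- For every natural number N ≥ 1 there is exactly one pair (p,q) with p ≤ q and p·q = N such that the complete bipartite graph K_{p,q} is determined by its adjacency spectrum; i.e., there exist p ≤ q with p·q = N such that K_{p,q} is DS, and for any other pair (a,b) with a ≤ b, a·b = N and (a,b) ≠ (p,q), the graph K_{a,b} is not DS. -/
open Polynomial

/-- `K_{p,q}` is determined by its adjacency spectrum: every finite simple graph that is
`A`-cospectral with `K_{p,q}` is isomorphic to it. -/
def CompleteBipartiteDS (p q : ℕ) : Prop :=
  ∀ (V : Type) (_ : Fintype V) (_ : DecidableEq V) (H : SimpleGraph V)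
    (_ : DecidableRel H.Adj),
    (H.adjMatrix ℝ).charpoly =
        ((completeBipartiteGraph (Fin p) (Fin q)).adjMatrix ℝ).charpoly →
      Nonempty (H ≃g completeBipartiteGraph (Fin p) (Fin q))

/-!
The DS pair is the factorization `N = p * q` with `p + q` minimal.

A graph `H` cospectral with `K_{p,q}` has characteristic polynomial `X ^ (n - 2) * (X ^ 2 - N)`;
as its adjacency matrix `A` is symmetric, Cayley–Hamilton then yields `A ^ 3 = N • A`, so every
walk of length three closes up to an edge. For an edge `uv` this makes the neighbourhoods of `v`
and `u` two independent sets joined completely, and counting the walks of length three from `v`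
to `u` shows that the product of their sizes is `N`. By minimality of `p + q` they cover all
`n = p + q` vertices, hence `H ≅ K_{p,q}`.

Conversely, the adjacency matrix of a complete bipartite graph with parts `P`, `Q`, plus any
number of isolated vertices, is `U * W` with `W * U = !![0, #Q; #P, 0]`, so its characteristic
polynomial only sees `#P * #Q` and the number of vertices. Thus when `a * b = N` and
`a + b > p + q`, the graph `K_{a,b}` is cospectral with `K_{p,q}` plus `a + b - p - q` isolated
vertices, and is not DS.
-/

open Finset

namespace Matrix

variable {n R : Type*} [Fintype n] [DecidableEq n]

theorem IsHermitian.mul_eq_zero_of_pow_succ_mul_eq_zero [PartialOrder R] [Ring R] [StarRing R]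
    [StarOrderedRing R] [NoZeroDivisors R] {A B : Matrix n n R} (hA : A.IsHermitian) :
    ∀ {k : ℕ}, A ^ (k + 1) * B = 0 → A * B = 0
  | 0, h => by rwa [zero_add, pow_one] at h
  | k + 1, h => by
    have h' : Aᴴ * A * (A ^ k * B) = 0 := by
      rw [hA.eq]; simpa only [pow_succ', Matrix.mul_assoc] using h
    refine hA.mul_eq_zero_of_pow_succ_mul_eq_zero (k := k) ?_
    rw [pow_succ', Matrix.mul_assoc]
    exact (conjTranspose_mul_self_mul_eq_zero A _).mp h'

theorem IsHermitian.pow_three_eq_smul_of_charpoly_eq [Field R] [PartialOrder R] [StarRing R]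
    [StarOrderedRing R] {A : Matrix n n R} (hA : A.IsHermitian) {k : ℕ} {c : R}
    (h : A.charpoly = X ^ k * (X ^ 2 - C c)) : A ^ 3 = c • A := by
  have hCH : A ^ (k + 1) * (A ^ 2 - c • 1) = 0 := by
    have := aeval_self_charpoly A
    rw [h] at this
    simp only [map_mul, map_pow, map_sub, aeval_X, aeval_C, Algebra.algebraMap_eq_smul_one] at this
    rw [pow_succ', Matrix.mul_assoc, this, Matrix.mul_zero]
  have := hA.mul_eq_zero_of_pow_succ_mul_eq_zero hCH
  rwa [Matrix.mul_sub, Matrix.mul_smul, Matrix.mul_one, sub_eq_zero, ← pow_succ'] at this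

end Matrix

theorem Polynomial.X_pow_ne_X_pow_sub_two_mul {R : Type*} [CommRing R] [Nontrivial R]
    {n : ℕ} (hn : 2 ≤ n) {c : R} (hc : c ≠ 0) :
    (X : R[X]) ^ n ≠ X ^ (n - 2) * (X ^ 2 - C c) := by
  rw [mul_sub, ← pow_add, Nat.sub_add_cancel hn, Ne, eq_comm, sub_eq_self]
  exact (monic_X_pow _).mul_right_ne_zero (C_ne_zero.mpr hc)

theorem Nat.eq_and_eq_or_eq_and_eq_of_mul_eq_of_add_eq {a b p q : ℕ} (hmul : a * b = p * q)
    (hadd : a + b = p + q) : a = p ∧ b = q ∨ a = q ∧ b = p := by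
  have hz : ((a : ℤ) - p) * ((a : ℤ) - q) = 0 := by
    linear_combination (a : ℤ) * (by exact_mod_cast hadd : (a : ℤ) + b = p + q) -
      (by exact_mod_cast hmul : (a : ℤ) * b = p * q)
  rcases _root_.mul_eq_zero.mp hz with h | h
  · exact .inl ⟨by omega, by omega⟩
  · exact .inr ⟨by omega, by omega⟩

theorem Nat.exists_le_mul_eq_forall_add_le {N : ℕ} (hN : N ≠ 0) :
    ∃ p q, p ≤ q ∧ p * q = N ∧ ∀ a b, a * b = N → p + q ≤ a + b := by
  obtain ⟨⟨a, b⟩, hab, hmin⟩ := N.divisorsAntidiagonal.exists_min_image (fun x => x.1 + x.2)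
    ⟨(1, N), by simp [hN]⟩
  replace hmin : ∀ c d, c * d = N → a + b ≤ c + d :=
    fun c d h => hmin (c, d) (by simp [h, hN])
  rw [Nat.mem_divisorsAntidiagonal] at hab
  rcases le_total a b with h | h
  · exact ⟨a, b, h, hab.1, hmin⟩
  · exact ⟨b, a, h, by rw [mul_comm, hab.1], fun c d hcd => add_comm a b ▸ hmin c d hcd⟩

namespace SimpleGraph

variable {V R : Type*} {G : SimpleGraph V}

theorem adj_iff_of_isBipartiteWith {s t : Set V} (hbip : G.IsBipartiteWith s t)
    (hcomp : G.IsCompleteBetween s t) {x y : V} :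
    G.Adj x y ↔ x ∈ s ∧ y ∈ t ∨ x ∈ t ∧ y ∈ s :=
  ⟨fun h => hbip.mem_of_adj h, by
    rintro (⟨hx, hy⟩ | ⟨hx, hy⟩)
    exacts [hcomp hx hy, (hcomp hy hx).symm]⟩

theorem isCompleteBetween_neighborSet_of_adj
    (hclosed : ∀ ⦃x a b y : V⦄, G.Adj x a → G.Adj a b → G.Adj b y → G.Adj x y)
    {u v : V} (huv : G.Adj u v) :
    G.IsCompleteBetween (G.neighborSet v) (G.neighborSet u) :=
  fun _ hx _ hy => hclosed (G.adj_symm hx) huv.symm hy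

theorem not_adj_of_mem_neighborSet
    (hclosed : ∀ ⦃x a b y : V⦄, G.Adj x a → G.Adj a b → G.Adj b y → G.Adj x y)
    {w x y : V} (hx : x ∈ G.neighborSet w) (hy : y ∈ G.neighborSet w) : ¬ G.Adj x y :=
  fun hxy => G.irrefl (hclosed hxy (G.adj_symm hy) hx)

theorem isBipartiteWith_neighborSet_of_adj
    (hclosed : ∀ ⦃x a b y : V⦄, G.Adj x a → G.Adj a b → G.Adj b y → G.Adj x y)
    {u v : V} (huv : G.Adj u v) (hcover : ∀ x, x ∈ G.neighborSet v ∨ x ∈ G.neighborSet u) :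
    G.IsBipartiteWith (G.neighborSet v) (G.neighborSet u) where
  disjoint := (isCompleteBetween_neighborSet_of_adj hclosed huv).disjoint
  mem_of_adj x y hxy := by
    rcases hcover x with hx | hx <;> rcases hcover y with hy | hy
    exacts [(not_adj_of_mem_neighborSet hclosed hx hy hxy).elim, .inl ⟨hx, hy⟩,
      .inr ⟨hx, hy⟩, (not_adj_of_mem_neighborSet hclosed hx hy hxy).elim]

variable [Fintype V] [DecidableEq V]

theorem nonempty_iso_completeBipartiteGraph {P Q : Finset V} (hbip : G.IsBipartiteWith P Q)
    (hcomp : G.IsCompleteBetween P Q) (hcover : P ∪ Q = univ) :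
    Nonempty (G ≃g completeBipartiteGraph (Fin #P) (Fin #Q)) := by
  have hPQ : Disjoint P Q := by simpa using hbip.disjoint
  have hQ : ∀ x, x ∉ P ↔ x ∈ Q := fun x =>
    ⟨fun hx => by simpa [hx] using Finset.ext_iff.mp hcover x,
      fun hx hxP => Finset.disjoint_left.mp hPQ hxP hx⟩
  let e : V ≃ Fin #P ⊕ Fin #Q := (Equiv.sumCompl (· ∈ P)).symm.trans
    (Equiv.sumCongr P.equivFin ((Equiv.subtypeEquivRight hQ).trans Q.equivFin))
  refine ⟨⟨e, fun {x y} => ?_⟩⟩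
  rw [adj_iff_of_isBipartiteWith hbip hcomp]
  by_cases hx : x ∈ P <;> by_cases hy : y ∈ P <;>
    simp [e, hx, hy, Equiv.sumCompl_symm_apply_of_pos, Equiv.sumCompl_symm_apply_of_neg, ← hQ]

variable [DecidableRel G.Adj]

theorem adj_of_adjMatrix_pow_three_eq_smul [Semiring R] [CharZero R] {c : R}
    (h : G.adjMatrix R ^ 3 = c • G.adjMatrix R) {x a b y : V}
    (hxa : G.Adj x a) (hab : G.Adj a b) (hby : G.Adj b y) : G.Adj x y := by
  by_contra hxy
  have hwalk : 0 < Fintype.card {p : G.Walk x y | p.length = 3} :=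
    Fintype.card_pos_iff.mpr ⟨⟨.cons hxa (.cons hab (.cons hby .nil)), rfl⟩⟩
  have := congrFun (congrFun h x) y
  rw [adjMatrix_pow_apply_eq_card_walk] at this
  simp only [Matrix.smul_apply, adjMatrix_apply, if_neg hxy, smul_zero, Nat.cast_eq_zero] at this
  exact hwalk.ne' this

theorem adjMatrix_pow_three_apply_of_isCompleteBetween [Semiring R] {u v : V}
    (h : G.IsCompleteBetween (G.neighborFinset u) (G.neighborFinset v)) :
    (G.adjMatrix R ^ 3) u v = #(G.neighborFinset u) * #(G.neighborFinset v) := by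
  have hone : ∀ x ∈ G.neighborFinset u, ∀ y ∈ G.neighborFinset v, G.adjMatrix R x y = 1 :=
    fun x hx y hy => by rw [adjMatrix_apply, if_pos (h hx hy)]
  rw [pow_three', mul_adjMatrix_apply]
  simp only [adjMatrix_mul_apply]
  rw [Finset.sum_comm, Finset.sum_congr rfl fun x hx => Finset.sum_congr rfl (hone x hx)]
  simp

theorem charpoly_adjMatrix_of_isBipartiteWith [CommRing R] [Nontrivial R] {P Q : Finset V}
    (hbip : G.IsBipartiteWith P Q) (hcomp : G.IsCompleteBetween P Q)
    (hV : 2 ≤ Fintype.card V) :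
    (G.adjMatrix R).charpoly = X ^ (Fintype.card V - 2) * (X ^ 2 - C (#P * #Q : R)) := by
  let U : Matrix V (Fin 2) R := .of fun x => ![if x ∈ P then 1 else 0, if x ∈ Q then 1 else 0]
  let W : Matrix (Fin 2) V R :=
    .of ![fun y => if y ∈ Q then 1 else 0, fun y => if y ∈ P then 1 else 0]
  have hPQ : Disjoint P Q := by simpa using hbip.disjoint
  have hA : G.adjMatrix R = U * W := by
    ext x y
    simp only [adjMatrix_apply, adj_iff_of_isBipartiteWith hbip hcomp, Finset.mem_coe,
      Matrix.mul_apply, Fin.sum_univ_two, U, W, Matrix.of_apply]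
    by_cases hxP : x ∈ P <;> by_cases hyP : y ∈ P <;>
      simp [hxP, hyP, Finset.disjoint_left.mp hPQ]
  have hWU : W * U = !![0, (#Q : R); (#P : R), 0] := by
    ext i j
    fin_cases i <;> fin_cases j <;>
      simp [Matrix.mul_apply, U, W, disjoint_iff_inter_eq_empty.mp hPQ,
        disjoint_iff_inter_eq_empty.mp hPQ.symm]
  rw [hA, Matrix.charpoly_mul_comm_of_le _ _ (by simpa using hV), Fintype.card_fin, hWU,
    Matrix.charpoly_fin_two, Matrix.trace_fin_two, Matrix.det_fin_two]
  simp only [Matrix.of_apply, Matrix.cons_val', Matrix.cons_val_zero, Matrix.cons_val_one,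
    Matrix.cons_val_fin_one, add_zero, map_zero, zero_mul, sub_zero, mul_zero, zero_sub, map_neg,
    map_mul, map_natCast]
  ring

end SimpleGraph

open SimpleGraph

theorem charpoly_adjMatrix_completeBipartiteGraph (R : Type*) [CommRing R] [Nontrivial R]
    {p q : ℕ} (h : 2 ≤ p + q) :
    ((completeBipartiteGraph (Fin p) (Fin q)).adjMatrix R).charpoly =
      X ^ (p + q - 2) * (X ^ 2 - C ((p : R) * q)) := by
  have := charpoly_adjMatrix_of_isBipartiteWith (R := R)
    (G := completeBipartiteGraph (Fin p) (Fin q))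
    (P := univ.map .inl) (Q := univ.map .inr) ?_ ?_ (by simpa using h)
  · simpa using this
  · constructor
    · simp [Set.disjoint_left]
    · rintro (x | x) (y | y) <;> simp
  · rintro (x | x) hx (y | y) hy <;> simp_all

theorem completeBipartiteDS_of_forall_add_le {p q : ℕ} (hpq : p * q ≠ 0)
    (hmin : ∀ a b, a * b = p * q → p + q ≤ a + b) : CompleteBipartiteDS p q := by
  intro V _ _ H _ hchar
  have hcard : Fintype.card V = p + q := by
    have := congrArg natDegree hchar
    rwa [Matrix.charpoly_natDegree_eq_dim, Matrix.charpoly_natDegree_eq_dim, Fintype.card_sum,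
      Fintype.card_fin, Fintype.card_fin] at this
  have h2 : 2 ≤ p + q := by
    have := Nat.mul_ne_zero_iff.mp hpq
    omega
  rw [charpoly_adjMatrix_completeBipartiteGraph ℝ h2, ← hcard] at hchar
  have h3 := (H.isHermitian_adjMatrix ℝ).pow_three_eq_smul_of_charpoly_eq hchar
  have hclosed : ∀ ⦃x a b y : V⦄, H.Adj x a → H.Adj a b → H.Adj b y → H.Adj x y :=
    fun _ _ _ _ => adj_of_adjMatrix_pow_three_eq_smul h3
  obtain ⟨u, v, huv⟩ : ∃ u v, H.Adj u v := by
    by_contra! hno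
    have : H.adjMatrix ℝ = 0 := by ext x y; simp [adjMatrix_apply, hno x y]
    rw [this, Matrix.charpoly_zero] at hchar
    exact X_pow_ne_X_pow_sub_two_mul (hcard ▸ h2) (by exact_mod_cast hpq) hchar
  have hcomp : H.IsCompleteBetween (H.neighborFinset v) (H.neighborFinset u) := by
    simpa using isCompleteBetween_neighborSet_of_adj hclosed huv
  set P := H.neighborFinset v
  set Q := H.neighborFinset u
  have hPQ : #P * #Q = p * q := by
    have := congrFun (congrFun h3 v) u
    rw [adjMatrix_pow_three_apply_of_isCompleteBetween hcomp, Matrix.smul_apply,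
      adjMatrix_apply, if_pos huv.symm, smul_eq_mul, mul_one] at this
    exact_mod_cast this
  have hdisj : Disjoint P Q := by simpa using hcomp.disjoint
  have hsum : #P + #Q = p + q := by
    refine le_antisymm ?_ (hmin _ _ hPQ)
    rw [← card_union_of_disjoint hdisj, ← hcard]
    exact card_le_univ _
  have hcover : P ∪ Q = univ :=
    eq_univ_of_card _ (by rw [card_union_of_disjoint hdisj, hsum, hcard])
  have hbip : H.IsBipartiteWith P Q := by
    simpa [P, Q] using isBipartiteWith_neighborSet_of_adj hclosed huv fun x => by
      simpa [P, Q] using Finset.ext_iff.mp hcover x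
  rcases Nat.eq_and_eq_or_eq_and_eq_of_mul_eq_of_add_eq hPQ hsum with ⟨hp, hq⟩ | ⟨hp, hq⟩
  · exact hp ▸ hq ▸ nonempty_iso_completeBipartiteGraph hbip hcomp hcover
  · exact hp ▸ hq ▸
      nonempty_iso_completeBipartiteGraph hbip.symm hcomp.symm (union_comm P Q ▸ hcover)

theorem not_completeBipartiteDS_of_add_lt {a b p q : ℕ} (hab : a * b ≠ 0)
    (hpq : p * q = a * b) (hlt : p + q < a + b) : ¬ CompleteBipartiteDS a b := by
  intro hDS
  obtain ⟨ha, hb⟩ := Nat.mul_ne_zero_iff.mp hab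
  let P : Finset (Fin (a + b)) := Iio ⟨p, by omega⟩
  let Q : Finset (Fin (a + b)) := Ico ⟨p, by omega⟩ ⟨p + q, hlt⟩
  have hPQ : Disjoint P Q := disjoint_left.mpr fun x hxP hxQ => by
    simp only [P, Q, mem_Iio, mem_Ico] at hxP hxQ
    exact hxQ.1.not_gt hxP
  let G := SimpleGraph.fromRel fun x y => x ∈ P ∧ y ∈ Q
  have hbip : G.IsBipartiteWith P Q :=
    ⟨by simpa using hPQ, fun x y hxy => by simpa [G, or_comm, and_comm] using hxy.2⟩
  have hcomp : G.IsCompleteBetween P Q := fun x hx y hy =>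
    ⟨fun h => disjoint_left.mp hPQ hx (h ▸ hy), .inl ⟨hx, hy⟩⟩
  let _ := Classical.decRel G.Adj
  have hcospec : (G.adjMatrix ℝ).charpoly =
      ((completeBipartiteGraph (Fin a) (Fin b)).adjMatrix ℝ).charpoly := by
    rw [charpoly_adjMatrix_of_isBipartiteWith hbip hcomp (by simp; omega),
      charpoly_adjMatrix_completeBipartiteGraph ℝ (by omega)]
    simp only [P, Q, Fintype.card_fin, Fin.card_Iio, Fin.card_Ico, add_tsub_cancel_left]
    rw [← Nat.cast_mul, hpq, Nat.cast_mul]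
  obtain ⟨e⟩ := hDS _ _ _ G _ hcospec
  let w : Fin (a + b) := ⟨p + q, hlt⟩
  have hw : ∀ x, ¬ G.Adj w x := fun x hwx => by
    rcases hbip.mem_of_adj hwx with ⟨hwP, -⟩ | ⟨hwQ, -⟩
    · simp [P, w] at hwP
    · simp [Q, w] at hwQ
  obtain ⟨y, hy⟩ : ∃ y, (completeBipartiteGraph (Fin a) (Fin b)).Adj (e w) y := by
    rcases e w with x | x
    exacts [⟨.inr ⟨0, by omega⟩, by simp⟩, ⟨.inl ⟨0, by omega⟩, by simp⟩]
  exact hw _ (by simpa using e.symm.map_adj_iff.mpr hy)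

/-- For every `N ≥ 1` there is exactly one pair `(p, q)` with `p ≤ q` and `p * q = N`
such that the complete bipartite graph `K_{p,q}` is determined by its adjacency
spectrum. -/
theorem exists_unique_DS_completeBipartiteGraph (N : ℕ) (hN : 1 ≤ N) :
    ∃ p q : ℕ, p ≤ q ∧ p * q = N ∧ CompleteBipartiteDS p q ∧
      ∀ a b : ℕ, a ≤ b → a * b = N → (a, b) ≠ (p, q) → ¬ CompleteBipartiteDS a b := by
  obtain ⟨p, q, hpq, rfl, hmin⟩ := Nat.exists_le_mul_eq_forall_add_le (N := N) (by omega)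
  refine ⟨p, q, hpq, rfl, completeBipartiteDS_of_forall_add_le (by omega) hmin, ?_⟩
  intro a b hab habN hne
  refine not_completeBipartiteDS_of_add_lt (by omega) habN.symm ?_
  refine (hmin a b habN).lt_of_ne fun hsum => hne ?_
  rcases Nat.eq_and_eq_or_eq_and_eq_of_mul_eq_of_add_eq habN hsum.symm with
    ⟨rfl, rfl⟩ | ⟨rfl, rfl⟩
  · rfl
  · rw [le_antisymm hpq hab]
end

section
/- Let k ≥ 2, q ≥ 1 and 1 ≤ s ≤ k−1 be natural numbers, and set n = k·q + s, r₁ = q·(k−s−1), r₂ = (q+1)·(s−1), n₁ = q·(k−s), n₂ = (q+1)·s. Then the characteristic polynomial of the adjacency matrix (over ℝ) of the Turán graph T(n,k) equals (X + q + 1)^{s−1} · (X + q)^{k−s−1} · X^{n−k} · (X² − (r₁+r₂)·X + (r₁·r₂ − n₁·n₂)). In particular r₁ + r₂ = n − 2q − 1. -/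
/-!
Write `p : Fin n → Fin k`, `v ↦ v % k`, for the partition into parts and `P` for its
`n × k` incidence matrix. The adjacency matrix of `T(n,k)` is `P (J - 1) Pᵀ` with `J` the all-ones
`k × k` matrix, while `Pᵀ P = diag(m)` records the part sizes. As `AB` and `BA` have the same
characteristic polynomial up to a power of `X`, the characteristic polynomial is `X^(n-k)` times
that of the quotient matrix `(J - 1) diag(m)`. For `x ≠ -mᵢ` the matrix determinant lemma gives
`det (x - (J - 1) diag(m)) = ∏ᵢ (x + mᵢ) · (1 - ∑ᵢ mᵢ / (x + mᵢ))`, and with `s` parts of size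
`q + 1` and `k - s` of size `q` this is the claimed product.
-/

open Polynomial Matrix Finset

@[to_additive]
theorem Fin.prod_ite_val_lt {M : Type*} [CommMonoid M] {k s : ℕ} (hsk : s ≤ k) (a b : M) :
    ∏ r : Fin k, (if r.val < s then a else b) = a ^ s * b ^ (k - s) := by
  have hlt : #{r : Fin k | r.val < s} = s := by
    rw [Fin.card_filter_val_lt, min_eq_right hsk]
  have hge : #{r : Fin k | ¬r.val < s} = k - s := by
    rw [filter_not, card_sdiff_of_subset (filter_subset _ _), card_univ, Fintype.card_fin, hlt]
  rw [prod_ite, Finset.prod_const, Finset.prod_const, hlt, hge]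

namespace Matrix

section Partition

variable {ι V : Type*} [DecidableEq ι]

def partitionMatrix (R : Type*) [Zero R] [One R] (p : V → ι) : Matrix V ι R :=
  of fun v i => if p v = i then 1 else 0

theorem partitionMatrix_mul_mul_transpose {R : Type*} [CommRing R] [Fintype ι] (p : V → ι)
    (M : Matrix ι ι R) :
    partitionMatrix R p * M * (partitionMatrix R p)ᵀ = M.submatrix p p := by
  ext v w
  simp [partitionMatrix, mul_apply]

theorem transpose_partitionMatrix_mul_self {R : Type*} [CommRing R] [Fintype V] (p : V → ι) :
    (partitionMatrix R p)ᵀ * partitionMatrix R p = diagonal fun i => (#{v | p v = i} : R) := by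
  ext i j
  simp only [partitionMatrix, mul_apply, transpose_apply, of_apply, mul_ite, mul_one, mul_zero,
    ← ite_and, Finset.sum_boole, diagonal_apply]
  by_cases hij : i = j
  · simp [hij]
  · have hdisj : ∀ v, ¬(p v = j ∧ p v = i) := fun v h => hij (h.2.symm.trans h.1)
    simp [hij, hdisj]

theorem charpoly_submatrix {R : Type*} [CommRing R] [Fintype ι] [Fintype V] [DecidableEq V]
    (p : V → ι) (M : Matrix ι ι R) (hle : Fintype.card ι ≤ Fintype.card V) :
    (M.submatrix p p).charpoly =
      X ^ (Fintype.card V - Fintype.card ι) *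
        (M * diagonal fun i => (#{v | p v = i} : R)).charpoly := by
  rw [← partitionMatrix_mul_mul_transpose, Matrix.mul_assoc, charpoly_mul_comm_of_le _ _ hle,
    Matrix.mul_assoc, transpose_partitionMatrix_mul_self]

end Partition

variable {K : Type*} [Field K] {ι : Type*} [Fintype ι] [DecidableEq ι]

theorem det_diagonal_add_replicateCol_mul_replicateRow {d : ι → K} (hd : ∀ i, d i ≠ 0)
    (u v : ι → K) :
    (diagonal d + replicateCol Unit u * replicateRow Unit v).det =
      (∏ i, d i) * (1 + ∑ i, v i * u i / d i) := by
  have hfactor : diagonal d + replicateCol Unit u * replicateRow Unit v =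
      diagonal d * (1 + replicateCol Unit (fun i => u i / d i) * replicateRow Unit v) := by
    rw [Matrix.mul_add, Matrix.mul_one, ← Matrix.mul_assoc]
    congr 2
    ext i j
    simp [diagonal_mul, mul_div_cancel₀ _ (hd i)]
  rw [hfactor, det_mul, det_diagonal, det_one_add_replicateCol_mul_replicateRow]
  simp only [dotProduct, mul_div_assoc]

theorem eval_charpoly_ones_sub_one_mul_diagonal (m : ι → K) {x : K} (hx : ∀ i, x + m i ≠ 0) :
    (((of fun _ _ => (1 : K)) - 1) * diagonal m).charpoly.eval x =
      (∏ i, (x + m i)) * (1 - ∑ i, m i / (x + m i)) := by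
  have hsplit : scalar ι x - ((of fun _ _ => (1 : K)) - 1) * diagonal m =
      diagonal (fun i => x + m i) +
        replicateCol Unit (fun _ => (1 : K)) * replicateRow Unit (-m) := by
    ext i j
    rw [Matrix.sub_mul, Matrix.one_mul]
    by_cases hij : i = j <;> simp [hij, mul_apply, diagonal_apply]
  rw [eval_charpoly, hsplit, det_diagonal_add_replicateCol_mul_replicateRow hx]
  simp [sub_eq_add_neg, neg_div]

theorem charpoly_ones_sub_one_mul_diagonal_ite [CharZero K] {k s : ℕ} (hs : 1 ≤ s) (hsk : s < k)
    (a b : K) :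
    (((of fun _ _ => (1 : K)) - 1) *
        diagonal fun r : Fin k => if r.val < s then a else b).charpoly =
      (X + C a) ^ (s - 1) * (X + C b) ^ (k - s - 1) *
        ((X + C a) * (X + C b) - C (s * a) * (X + C b) - C ((k - s : ℕ) * b) * (X + C a)) := by
  apply eq_of_infinite_eval_eq
  refine (Set.toFinite {-a, -b}).infinite_compl.mono fun x hxab => ?_
  obtain ⟨hxa, hxb⟩ : x + a ≠ 0 ∧ x + b ≠ 0 := by
    simpa [eq_neg_iff_add_eq_zero] using hxab
  have hx : ∀ r : Fin k, x + (if r.val < s then a else b) ≠ 0 := fun r => by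
    split_ifs
    exacts [hxa, hxb]
  have hsum : ∑ r : Fin k, (if r.val < s then a else b) / (x + if r.val < s then a else b) =
      s • (a / (x + a)) + (k - s) • (b / (x + b)) := by
    rw [← Fin.sum_ite_val_lt hsk.le]
    exact sum_congr rfl fun r _ => by split_ifs <;> rfl
  have hprod : ∏ r : Fin k, (x + if r.val < s then a else b) =
      (x + a) ^ s * (x + b) ^ (k - s) := by
    rw [← Fin.prod_ite_val_lt hsk.le]
    exact prod_congr rfl fun r _ => by split_ifs <;> rfl
  rw [Set.mem_ofPred_eq, eval_charpoly_ones_sub_one_mul_diagonal _ hx, hsum, hprod]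
  obtain ⟨s', rfl⟩ : ∃ s', s = s' + 1 := ⟨s - 1, by omega⟩
  obtain ⟨t, ht⟩ : ∃ t, k - (s' + 1) = t + 1 := ⟨k - (s' + 1) - 1, by omega⟩
  simp only [ht, nsmul_eq_mul, Nat.add_sub_cancel, eval_mul, eval_pow, eval_add, eval_sub,
    eval_X, eval_C]
  field_simp
  ring

end Matrix

theorem SimpleGraph.adjMatrix_turanGraph {R : Type*} [Ring R] (n k : ℕ) [NeZero k] :
    (turanGraph n k).adjMatrix R =
      ((of fun _ _ => (1 : R)) - 1).submatrix (fun v : Fin n => Fin.ofNat k v)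
        (fun v : Fin n => Fin.ofNat k v) := by
  ext v w
  by_cases hvw : v.val % k = w.val % k <;>
    simp [turanGraph_adj, one_apply, Fin.ext_iff, hvw]

theorem Fin.card_filter_ofNat_eq {k q s : ℕ} [NeZero k] (hs : s < k) (r : Fin k) :
    #{v : Fin (k * q + s) | Fin.ofNat k v = r} = if r.val < s then q + 1 else q := by
  have hcount : #{v : Fin (k * q + s) | Fin.ofNat k v = r} =
      (k * q + s).count (· ≡ r.val [MOD k]) := by
    rw [Nat.count_eq_card_filter_range, ← card_map Fin.valEmbedding]
    congr 1
    ext x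
    simp only [mem_map, mem_filter, mem_univ, true_and, Fin.ext_iff, Fin.val_ofNat,
      Fin.valEmbedding_apply, mem_range, Nat.ModEq, Nat.mod_eq_of_lt r.isLt]
    constructor
    · rintro ⟨v, hv, rfl⟩
      exact ⟨v.isLt, hv⟩
    · rintro ⟨hx, hxr⟩
      exact ⟨⟨x, hx⟩, hxr, rfl⟩
  rw [hcount, Nat.count_modEq_card _ (NeZero.pos k), Nat.mod_eq_of_lt r.isLt,
    Nat.mul_add_div (NeZero.pos k), Nat.div_eq_of_lt hs, Nat.mul_add_mod_self_left,
    Nat.mod_eq_of_lt hs]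
  split_ifs <;> rfl

theorem charpoly_adjMatrix_turanGraph_irregular_general (k q s : ℕ) (hq : 1 ≤ q)
    (hs1 : 1 ≤ s) (hs2 : s ≤ k - 1) (n r₁ r₂ n₁ n₂ : ℕ)
    (hn : n = k * q + s) (hr₁ : r₁ = q * (k - s - 1)) (hr₂ : r₂ = (q + 1) * (s - 1))
    (hn₁ : n₁ = q * (k - s)) (hn₂ : n₂ = (q + 1) * s) :
    ((SimpleGraph.turanGraph n k).adjMatrix ℝ).charpoly =
      (X + C ((q : ℝ) + 1)) ^ (s - 1) * (X + C (q : ℝ)) ^ (k - s - 1) * X ^ (n - k) *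
        (X ^ 2 - C ((r₁ : ℝ) + (r₂ : ℝ)) * X + C ((r₁ : ℝ) * (r₂ : ℝ) - (n₁ : ℝ) * (n₂ : ℝ)))
    ∧ (r₁ : ℝ) + (r₂ : ℝ) = (n : ℝ) - 2 * q - 1 := by
  have hsk : s < k := by omega
  have : NeZero k := ⟨by omega⟩
  have R₁ : (r₁ : ℝ) = q * (k - s - 1) := by
    rw [hr₁, Nat.cast_mul, Nat.cast_sub (by omega : 1 ≤ k - s), Nat.cast_sub hsk.le, Nat.cast_one]
  have R₂ : (r₂ : ℝ) = (q + 1) * (s - 1) := by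
    rw [hr₂, Nat.cast_mul, Nat.cast_sub hs1]; push_cast; ring
  have N₁ : (n₁ : ℝ) = q * (k - s) := by rw [hn₁, Nat.cast_mul, Nat.cast_sub hsk.le]
  have N₂ : (n₂ : ℝ) = (q + 1) * s := by rw [hn₂]; push_cast; ring
  subst hn
  have hle : Fintype.card (Fin k) ≤ Fintype.card (Fin (k * q + s)) := by
    simpa using Nat.le_add_right_of_le (Nat.le_mul_of_pos_right k hq)
  have hparts : (fun r : Fin k => (#{v : Fin (k * q + s) | Fin.ofNat k v = r} : ℝ)) =
      fun r => if r.val < s then (q : ℝ) + 1 else q := by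
    funext r
    rw [Fin.card_filter_ofNat_eq hsk]
    split_ifs <;> push_cast <;> rfl
  rw [R₁, R₂, N₁, N₂]
  refine ⟨?_, by push_cast; ring⟩
  rw [SimpleGraph.adjMatrix_turanGraph, Matrix.charpoly_submatrix _ _ hle, hparts,
    Matrix.charpoly_ones_sub_one_mul_diagonal_ite hs1 hsk, Fintype.card_fin, Fintype.card_fin,
    Nat.cast_sub hsk.le]
  simp only [map_add, map_sub, map_mul, map_one, map_natCast]
  ring

/-- The characteristic polynomial of the adjacency matrix (over `ℝ`) of the (irregular)
Turán graph `T(n,k)` with `n = k*q + s`, `1 ≤ s ≤ k - 1`, equals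
`(X + q + 1)^(s-1) * (X + q)^(k-s-1) * X^(n-k) * (X² - (r₁+r₂)X + (r₁r₂ - n₁n₂))`,
where `r₁ = q*(k-s-1)`, `r₂ = (q+1)*(s-1)`, `n₁ = q*(k-s)`, `n₂ = (q+1)*s`.
In particular `r₁ + r₂ = n - 2q - 1`. -/
theorem charpoly_adjMatrix_turanGraph_irregular (k q s : ℕ) (hk : 2 ≤ k) (hq : 1 ≤ q)
    (hs1 : 1 ≤ s) (hs2 : s ≤ k - 1) (n r₁ r₂ n₁ n₂ : ℕ)
    (hn : n = k * q + s) (hr₁ : r₁ = q * (k - s - 1)) (hr₂ : r₂ = (q + 1) * (s - 1))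
    (hn₁ : n₁ = q * (k - s)) (hn₂ : n₂ = (q + 1) * s) :
    ((SimpleGraph.turanGraph n k).adjMatrix ℝ).charpoly =
      (X + C ((q : ℝ) + 1)) ^ (s - 1) * (X + C (q : ℝ)) ^ (k - s - 1) * X ^ (n - k) *
        (X ^ 2 - C ((r₁ : ℝ) + (r₂ : ℝ)) * X + C ((r₁ : ℝ) * (r₂ : ℝ) - (n₁ : ℝ) * (n₂ : ℝ)))
    ∧ (r₁ : ℝ) + (r₂ : ℝ) = (n : ℝ) - 2 * q - 1 :=
  charpoly_adjMatrix_turanGraph_irregular_general k q s hq hs1 hs2 n r₁ r₂ n₁ n₂ hn hr₁ hr₂ hn₁ hn₂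
end

section
/- Let 1 ≤ k ≤ n. The Turán graph T(n,k) is determined by its adjacency spectrum: every finite simple graph whose adjacency matrix has the same characteristic polynomial (over ℝ) as that of T(n,k) is isomorphic to T(n,k). -/
/-!
Cospectral graphs have the same number of vertices, the same number of edges (`tr A² = ∑ λ²`) and
the same adjacency rank (the number of nonzero eigenvalues). The rows of the adjacency matrix of
`T(n,k)` depend only on the part of the vertex, so its rank is at most `k`, whereas a
`(k+1)`-clique yields the principal submatrix `J - I` of full rank `k + 1`. Hence a graph
cospectral with `T(n,k)` is `K_{k+1}`-free with as many edges as `T(n,k)`, and Turán's theorem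
identifies it with `T(n,k)`.
-/

open Polynomial Finset Matrix

namespace Matrix.IsHermitian

variable {𝕜 n : Type*} [RCLike 𝕜] [Fintype n] [DecidableEq n] {A : Matrix n n 𝕜}

theorem rank_eq_countP_roots_charpoly (hA : A.IsHermitian) :
    A.rank = A.charpoly.roots.countP (· ≠ 0) := by
  rw [hA.rank_eq_card_non_zero_eigs, hA.roots_charpoly_eq_eigenvalues, Multiset.countP_map,
    Fintype.card_subtype, Finset.card_def, Finset.filter_val]
  simp

theorem trace_mul_self_eq_sum_roots_charpoly (hA : A.IsHermitian) :
    (A * A).trace = (A.charpoly.roots.map fun x => x * x).sum := by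
  conv_lhs => rw [hA.spectral_theorem, ← map_mul, Unitary.conjStarAlgAut_apply, trace_mul_cycle,
    Unitary.coe_star_mul_self, one_mul, diagonal_mul_diagonal, trace_diagonal]
  rw [hA.roots_charpoly_eq_eigenvalues, Multiset.map_map]
  rfl

end Matrix.IsHermitian

namespace SimpleGraph

variable {V : Type*} [Fintype V]

theorem trace_adjMatrix_mul_self (G : SimpleGraph V) [DecidableRel G.Adj] (R : Type*)
    [NonAssocSemiring R] : (G.adjMatrix R * G.adjMatrix R).trace = 2 * #G.edgeFinset := by
  simp only [trace, diag_apply, adjMatrix_mul_self_apply_self]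
  rw [← Nat.cast_sum, sum_degrees_eq_twice_card_edges]
  push_cast
  rfl

theorem det_adjMatrix_top [DecidableEq V] (R : Type*) [CommRing R] :
    ((⊤ : SimpleGraph V).adjMatrix R).det = (-1) ^ Fintype.card V * (1 - Fintype.card V) := by
  have hJ : (⊤ : SimpleGraph V).adjMatrix R =
      -(1 - (replicateCol Unit (1 : V → R) : Matrix V Unit R) *
        (replicateRow Unit (1 : V → R) : Matrix Unit V R)) := by
    ext i j
    by_cases hij : i = j <;> simp [hij, one_apply, mul_apply]
  rw [hJ, det_neg, det_one_sub_mul_comm, det_unique, Matrix.sub_apply, one_apply_eq,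
    replicateRow_mul_replicateCol_apply]
  simp

theorem rank_adjMatrix_top [DecidableEq V] (K : Type*) [Field K] [CharZero K]
    (h : Fintype.card V ≠ 1) : ((⊤ : SimpleGraph V).adjMatrix K).rank = Fintype.card V := by
  refine rank_of_isUnit _ ((isUnit_iff_isUnit_det _).2 (Ne.isUnit ?_))
  rw [det_adjMatrix_top]
  refine mul_ne_zero (pow_ne_zero _ (by norm_num)) (sub_ne_zero.2 ?_)
  exact_mod_cast h.symm

variable {G : SimpleGraph V} [DecidableRel G.Adj]

theorem le_rank_adjMatrix_of_isNClique (K : Type*) [Field K] [CharZero K] {m : ℕ} {s : Finset V}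
    (hm : m ≠ 1) (hs : G.IsNClique m s) : m ≤ (G.adjMatrix K).rank := by
  classical
  have hsub : (G.adjMatrix K).submatrix ((↑) : s → V) (↑) = (⊤ : SimpleGraph s).adjMatrix K := by
    ext i j
    by_cases hij : i = j
    · simp [hij]
    · simp [hij, hs.isClique i.2 j.2 (Subtype.coe_injective.ne hij)]
  calc m = Fintype.card s := by simp [hs.card_eq]
    _ = ((⊤ : SimpleGraph s).adjMatrix K).rank :=
      (rank_adjMatrix_top K (by simpa [hs.card_eq])).symm
    _ ≤ (G.adjMatrix K).rank := hsub ▸ rank_submatrix_le _ _ _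

theorem cliqueFree_of_rank_adjMatrix_le (K : Type*) [Field K] [CharZero K] {r : ℕ} (hr : r ≠ 0)
    (h : (G.adjMatrix K).rank ≤ r) : G.CliqueFree (r + 1) := fun s hs =>
  (le_rank_adjMatrix_of_isNClique K (by omega) hs).not_gt (by omega)

theorem rank_adjMatrix_le_of_adj_iff_ne {ι : Type*} [Fintype ι] (R : Type*) [CommRing R]
    [StrongRankCondition R] (p : V → ι) (hp : ∀ v w, G.Adj v w ↔ p v ≠ p w) :
    (G.adjMatrix R).rank ≤ Fintype.card ι := by
  classical
  have : G.adjMatrix R = (of fun i w => if i ≠ p w then (1 : R) else 0).submatrix p id := by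
    ext v w
    simp [hp]
  rw [this]
  exact (rank_submatrix_le _ _ _).trans (rank_le_card_height _)

theorem rank_adjMatrix_turanGraph_le (R : Type*) [CommRing R] [StrongRankCondition R] {n r : ℕ}
    (hr : 0 < r) : ((turanGraph n r).adjMatrix R).rank ≤ r := by
  simpa using rank_adjMatrix_le_of_adj_iff_ne R
    (fun v : Fin n => (⟨v % r, Nat.mod_lt _ hr⟩ : Fin r)) fun v w => by
      simp [turanGraph_adj, Fin.ext_iff]

theorem nonempty_iso_turanGraph_of_cliqueFree {r : ℕ} (hr : 0 < r) (hG : G.CliqueFree (r + 1))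
    (he : #(turanGraph (Fintype.card V) r).edgeFinset ≤ #G.edgeFinset) :
    Nonempty (G ≃g turanGraph (Fintype.card V) r) := by
  refine (isTuranMaximal_iff_nonempty_iso_turanGraph hr).1 ⟨hG, fun H _ hH => ?_⟩
  obtain ⟨J, _, hJ⟩ := exists_isTuranMaximal (V := V) hr
  calc #H.edgeFinset ≤ #J.edgeFinset := hJ.2 hH
    _ = #(turanGraph (Fintype.card V) r).edgeFinset :=
      hJ.nonempty_iso_turanGraph.some.card_edgeFinset_eq
    _ ≤ #G.edgeFinset := he

variable {𝕜 : Type*} [RCLike 𝕜] [DecidableEq V] {W : Type*} [Fintype W] [DecidableEq W]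
  {H : SimpleGraph W} [DecidableRel H.Adj]

theorem card_edgeFinset_eq_of_charpoly_adjMatrix_eq
    (h : (G.adjMatrix 𝕜).charpoly = (H.adjMatrix 𝕜).charpoly) : #G.edgeFinset = #H.edgeFinset := by
  have hG := (G.isHermitian_adjMatrix 𝕜).trace_mul_self_eq_sum_roots_charpoly
  have hH := (H.isHermitian_adjMatrix 𝕜).trace_mul_self_eq_sum_roots_charpoly
  rw [trace_adjMatrix_mul_self] at hG hH
  exact_mod_cast (mul_right_inj' two_ne_zero).1 (hG.trans (h ▸ hH.symm))

theorem rank_adjMatrix_eq_of_charpoly_adjMatrix_eq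
    (h : (G.adjMatrix 𝕜).charpoly = (H.adjMatrix 𝕜).charpoly) :
    (G.adjMatrix 𝕜).rank = (H.adjMatrix 𝕜).rank := by
  rw [(G.isHermitian_adjMatrix 𝕜).rank_eq_countP_roots_charpoly,
    (H.isHermitian_adjMatrix 𝕜).rank_eq_countP_roots_charpoly, h]

end SimpleGraph

theorem turanGraph_DS_general (n k : ℕ) (hk : 1 ≤ k)
    {V : Type} [Fintype V] [DecidableEq V] (G : SimpleGraph V) [DecidableRel G.Adj]
    (h : (G.adjMatrix ℝ).charpoly = ((SimpleGraph.turanGraph n k).adjMatrix ℝ).charpoly) :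
    Nonempty (G ≃g SimpleGraph.turanGraph n k) := by
  obtain rfl : Fintype.card V = n := by simpa using congrArg natDegree h
  refine SimpleGraph.nonempty_iso_turanGraph_of_cliqueFree hk ?_
    (SimpleGraph.card_edgeFinset_eq_of_charpoly_adjMatrix_eq h).ge
  refine SimpleGraph.cliqueFree_of_rank_adjMatrix_le ℝ (by omega) ?_
  rw [SimpleGraph.rank_adjMatrix_eq_of_charpoly_adjMatrix_eq h]
  exact SimpleGraph.rank_adjMatrix_turanGraph_le ℝ hk

/-- The Turán graph `T(n,k)` is determined by its adjacency spectrum: every finite simple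
graph whose adjacency matrix has the same characteristic polynomial (over `ℝ`) as that of
`T(n,k)` is isomorphic to `T(n,k)`. -/
theorem turanGraph_DS (n k : ℕ) (hk : 1 ≤ k) (hkn : k ≤ n)
    {V : Type} [Fintype V] [DecidableEq V] (G : SimpleGraph V) [DecidableRel G.Adj]
    (h : (G.adjMatrix ℝ).charpoly = ((SimpleGraph.turanGraph n k).adjMatrix ℝ).charpoly) :
    Nonempty (G ≃g SimpleGraph.turanGraph n k) :=
  turanGraph_DS_general n k hk G h
end

section
/- Let 1 ≤ k ≤ n and write n = k·q + s with 0 ≤ s ≤ k−1. Let G be a complete k-partite graph on n vertices, given by a surjective map f from its vertex set onto Fin k with u adjacent to v iff f(u) ≠ f(v), and suppose G has the same number of edges as the Turán graph T(n,k). Then every part of G has size q or q+1: for every i ∈ Fin k, q ≤ |f⁻¹(i)| ≤ q + 1. -/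
open Polynomial


lemma aux_handshake {V : Type} [Fintype V] [DecidableEq V] {k : ℕ}
    (G : SimpleGraph V) [DecidableRel G.Adj] (f : V → Fin k)
    (hadj : ∀ u v : V, G.Adj u v ↔ f u ≠ f v) :
    2 * G.edgeFinset.card
      + ∑ i : Fin k, (Finset.univ.filter (fun v => f v = i)).card
          * (Finset.univ.filter (fun v => f v = i)).card
      = Fintype.card V * Fintype.card V := by
  have hdeg : ∀ v : V, G.degree v
      = (Finset.univ.filter (fun u => ¬ f u = f v)).card := by
    intro v
    rw [← SimpleGraph.card_neighborFinset_eq_degree, SimpleGraph.neighborFinset_eq_filter]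
    congr 1
    apply Finset.filter_congr
    intro u _
    simp [hadj, ne_comm, eq_comm]
  have hdeg' : ∀ v : V, G.degree v + (Finset.univ.filter (fun u => f u = f v)).card
      = Fintype.card V := by
    intro v
    rw [hdeg v, add_comm]
    exact Finset.card_filter_add_card_filter_not _
  have h1 : ∑ v : V, (G.degree v + (Finset.univ.filter (fun u => f u = f v)).card)
      = Fintype.card V * Fintype.card V := by
    simp [hdeg', Finset.sum_const, Finset.card_univ]
  rw [Finset.sum_add_distrib, SimpleGraph.sum_degrees_eq_twice_card_edges] at h1
  have h2 : ∑ v : V, (Finset.univ.filter (fun u => f u = f v)).card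
      = ∑ i : Fin k, (Finset.univ.filter (fun v => f v = i)).card
          * (Finset.univ.filter (fun v => f v = i)).card := by
    rw [← Finset.sum_fiberwise Finset.univ f
        (fun v => (Finset.univ.filter (fun u => f u = f v)).card)]
    refine Finset.sum_congr rfl fun i _ => ?_
    rw [Finset.sum_congr rfl (fun v hv => by
        simp only [Finset.mem_filter] at hv; rw [hv.2]), Finset.sum_const, smul_eq_mul]
  omega

lemma turan_fiber_card (n k : ℕ) (hk : 1 ≤ k) (i : Fin k) :
    (Finset.univ.filter (fun v : Fin n =>
        (⟨v.val % k, Nat.mod_lt _ hk⟩ : Fin k) = i)).card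
      = n / k + (if i.val < n % k then 1 else 0) := by
  have h1 : (Finset.univ.filter (fun v : Fin n =>
        (⟨v.val % k, Nat.mod_lt _ hk⟩ : Fin k) = i)).card
      = ((Finset.range n).filter (fun v => v ≡ i.val [MOD k])).card := by
    rw [Finset.card_filter, Finset.card_filter, ← Fin.sum_univ_eq_sum_range]
    refine Finset.sum_congr rfl fun v _ => ?_
    congr 1
    simp [Fin.ext_iff, Nat.ModEq, Nat.mod_eq_of_lt i.isLt]
  rw [h1, ← Nat.count_eq_card_filter_range, Nat.count_modEq_card _ hk,
    Nat.mod_eq_of_lt i.isLt]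

/-- Let `n = k*q + s` with `0 ≤ s ≤ k - 1`. If `G` is a complete `k`-partite graph on `n`
vertices (given by a surjection `f` onto `Fin k` with `u ~ v` iff `f u ≠ f v`) having the
same number of edges as the Turán graph `T(n,k)`, then every part of `G` has size `q` or
`q + 1`. -/
theorem parts_balanced_of_edgeCard_eq_turanGraph (n k q s : ℕ) (hk : 1 ≤ k) (hkn : k ≤ n)
    (hn : n = k * q + s) (hs : s ≤ k - 1)
    {V : Type} [Fintype V] [DecidableEq V] (G : SimpleGraph V) [DecidableRel G.Adj]
    (hcard : Fintype.card V = n)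
    (f : V → Fin k) (hf : Function.Surjective f)
    (hadj : ∀ u v : V, G.Adj u v ↔ f u ≠ f v)
    (hedges : G.edgeFinset.card = (SimpleGraph.turanGraph n k).edgeFinset.card) :
    ∀ i : Fin k, q ≤ (Finset.univ.filter (fun v : V => f v = i)).card ∧
      (Finset.univ.filter (fun v : V => f v = i)).card ≤ q + 1 := by
  have hsk : s < k := by omega
  have hq : n / k = q := by
    rw [hn, Nat.mul_add_div hk, Nat.div_eq_of_lt hsk, add_zero]
  have hsr : n % k = s := by
    rw [hn, Nat.mul_add_mod, Nat.mod_eq_of_lt hsk]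
  set c : Fin k → ℕ := fun i => (Finset.univ.filter (fun v : V => f v = i)).card with hc
  set t : Fin k → ℕ := fun i => (Finset.univ.filter (fun v : Fin n =>
      (⟨v.val % k, Nat.mod_lt _ hk⟩ : Fin k) = i)).card with ht
  -- handshake for G
  have hA : 2 * G.edgeFinset.card + ∑ i : Fin k, c i * c i = n * n := by
    have h := aux_handshake G f hadj
    rw [hcard] at h
    exact h
  -- handshake for Turán graph
  have hadj' : ∀ u v : Fin n, (SimpleGraph.turanGraph n k).Adj u v ↔
      (⟨u.val % k, Nat.mod_lt _ hk⟩ : Fin k) ≠ ⟨v.val % k, Nat.mod_lt _ hk⟩ := by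
    intro u v
    simp [SimpleGraph.turanGraph, Fin.ext_iff]
  have hB : 2 * (SimpleGraph.turanGraph n k).edgeFinset.card
      + ∑ i : Fin k, t i * t i = n * n := by
    have h := aux_handshake (SimpleGraph.turanGraph n k)
      (fun v : Fin n => (⟨v.val % k, Nat.mod_lt _ hk⟩ : Fin k)) hadj'
    rw [Fintype.card_fin] at h
    exact h
  -- sums of parts
  have hcsum : ∑ i : Fin k, c i = n := by
    rw [hc, ← Finset.card_eq_sum_card_fiberwise (fun x _ => Finset.mem_univ (f x)),
      Finset.card_univ, hcard]
  have htval : ∀ i : Fin k, t i = q ∨ t i = q + 1 := by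
    intro i
    rw [ht]
    simp only []
    rw [turan_fiber_card n k hk i, hq, hsr]
    split <;> omega
  have htsum : ∑ i : Fin k, t i = n := by
    rw [ht, ← Finset.card_eq_sum_card_fiberwise (fun x _ => Finset.mem_univ _),
      Finset.card_univ, Fintype.card_fin]
  -- equality of sums of squares
  have hsq : ∑ i : Fin k, c i * c i = ∑ i : Fin k, t i * t i := by omega
  -- pass to ℤ
  have htsq : ∑ i : Fin k, (t i : ℤ) * t i
      = (2 * q + 1) * n - k * (q * (q + 1)) := by
    have : ∀ i : Fin k, (t i : ℤ) * t i = (2 * q + 1) * t i - q * (q + 1) := by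
      intro i
      rcases htval i with h | h <;> rw [h] <;> push_cast <;> ring
    rw [Finset.sum_congr rfl fun i _ => this i, Finset.sum_sub_distrib,
      ← Finset.mul_sum, Finset.sum_const, Finset.card_univ, Fintype.card_fin,
      ← Nat.cast_sum, htsum]
    push_cast
    ring
  have hcsq : ∑ i : Fin k, (c i : ℤ) * c i
      = (2 * q + 1) * n - k * (q * (q + 1)) := by
    rw [← htsq]
    push_cast [← Nat.cast_sum]
    exact_mod_cast congrArg (Nat.cast (R := ℤ)) hsq
  have hzero : ∑ i : Fin k, (((c i : ℤ) - q) * ((c i : ℤ) - q) - ((c i : ℤ) - q)) = 0 := by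
    have e1 : ∑ i : Fin k, ((c i : ℤ) - q) * ((c i : ℤ) - q)
        = ∑ i : Fin k, ((c i : ℤ) * c i - (2 * q) * c i + q * q) := by
      refine Finset.sum_congr rfl fun i _ => by ring
    rw [Finset.sum_sub_distrib, e1]
    have hcs : ∑ i : Fin k, (c i : ℤ) = n := by exact_mod_cast hcsum
    simp only [Finset.sum_add_distrib, Finset.sum_sub_distrib, ← Finset.mul_sum,
      Finset.sum_const, Finset.card_univ, Fintype.card_fin, hcs, hcsq, smul_eq_mul]
    rw [hn]
    push_cast
    ring
  have hnn : ∀ i ∈ Finset.univ, (0:ℤ) ≤ ((c i : ℤ) - q) * ((c i : ℤ) - q) - ((c i : ℤ) - q) := by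
    intro i _
    nlinarith [sq_nonneg ((c i : ℤ) - q), sq_nonneg ((c i : ℤ) - q - 1)]
  intro i
  show q ≤ c i ∧ c i ≤ q + 1
  have := (Finset.sum_eq_zero_iff_of_nonneg hnn).mp hzero i (Finset.mem_univ i)
  have hd : ((c i : ℤ) - q) * ((c i : ℤ) - q - 1) = 0 := by linarith
  rcases mul_eq_zero.mp hd with h | h
  · have : (c i : ℤ) = q := by linarith
    have : c i = q := by exact_mod_cast this
    omega
  · have : (c i : ℤ) = q + 1 := by linarith
    have : c i = (q + 1 : ℕ) := by exact_mod_cast this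
    omega
end

section
/- A graph's regularity is determined by its adjacency spectrum: let G be a finite simple graph on n ≥ 1 vertices, let A be its (symmetric, real) adjacency matrix, and let λ₁ denote the largest eigenvalue of A. Then G is regular (i.e., there exists d such that every vertex has degree d) if and only if the sum of the squares of the eigenvalues of A equals n·λ₁; equivalently, trace(A²) = n·λ₁. -/
/-!
Let `𝟙` be the all-ones vector and `λ₁` the largest eigenvalue of `A`. Both `∑ λᵢ²` and
`trace (A²)` equal `𝟙 ⬝ A 𝟙 = ∑ deg v`, and the Rayleigh bound gives `𝟙 ⬝ A 𝟙 ≤ λ₁ n`.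
Equality there means `𝟙` lies in the kernel of the positive semidefinite matrix `λ₁ I - A`,
i.e. every degree equals `λ₁`. Conversely, for a `d`-regular graph `𝟙 ⬝ A 𝟙 = d n` and
Gershgorin's theorem gives `λ₁ ≤ d`.
-/

open Matrix Finset

namespace Matrix

variable {R n : Type*} [Fintype n]

theorem star_dotProduct_mul_mul_star_mulVec [CommSemiring R] [StarRing R]
    (U M : Matrix n n R) (x : n → R) :
    star x ⬝ᵥ (U * M * star U) *ᵥ x = star (star U *ᵥ x) ⬝ᵥ M *ᵥ (star U *ᵥ x) := by
  rw [← mulVec_mulVec, ← mulVec_mulVec, dotProduct_mulVec, star_mulVec, star_eq_conjTranspose,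
    conjTranspose_conjTranspose]

theorem dotProduct_smul_one_sub_mulVec [CommRing R] [DecidableEq n] (c : R) (A : Matrix n n R)
    (x : n → R) : x ⬝ᵥ (c • 1 - A) *ᵥ x = c * (x ⬝ᵥ x) - x ⬝ᵥ A *ᵥ x := by
  rw [sub_mulVec, dotProduct_sub, smul_mulVec, one_mulVec, dotProduct_smul, smul_eq_mul]

namespace IsHermitian

variable [DecidableEq n]

theorem trace_sq_eq_sum_sq_eigenvalues {𝕜 : Type*} [RCLike 𝕜] {A : Matrix n n 𝕜}
    (hA : A.IsHermitian) :
    (A ^ 2).trace = ∑ i, (hA.eigenvalues i : 𝕜) ^ 2 := by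
  conv_lhs => rw [hA.spectral_theorem]
  rw [← map_pow, Unitary.conjStarAlgAut_apply, trace_mul_cycle, Unitary.coe_star_mul_self,
    one_mul, diagonal_pow, trace_diagonal]
  rfl

variable {A : Matrix n n ℝ}

theorem dotProduct_mulVec_eq_sum_eigenvalues_mul (hA : A.IsHermitian) (x : n → ℝ) :
    x ⬝ᵥ A *ᵥ x =
      ∑ i, hA.eigenvalues i * (star (hA.eigenvectorUnitary : Matrix n n ℝ) *ᵥ x) i ^ 2 := by
  set U : Matrix n n ℝ := (hA.eigenvectorUnitary : Matrix n n ℝ)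
  have hspec : A = U * diagonal hA.eigenvalues * star U := by
    conv_lhs => rw [hA.spectral_theorem]
    rfl
  calc x ⬝ᵥ A *ᵥ x = star x ⬝ᵥ (U * diagonal hA.eigenvalues * star U) *ᵥ x := by
        rw [star_trivial x]
        conv_lhs => rw [hspec]
    _ = _ := by
        rw [star_dotProduct_mul_mul_star_mulVec, star_trivial (star U *ᵥ x)]
        simp only [dotProduct, mulVec_diagonal, sq, mul_left_comm]

theorem dotProduct_self_eq_sum_sq (hA : A.IsHermitian) (x : n → ℝ) :
    x ⬝ᵥ x = ∑ i, (star (hA.eigenvectorUnitary : Matrix n n ℝ) *ᵥ x) i ^ 2 := by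
  have := star_dotProduct_mul_mul_star_mulVec (hA.eigenvectorUnitary : Matrix n n ℝ) 1 x
  rw [star_trivial x, star_trivial (_ *ᵥ x), mul_one,
    Unitary.mul_star_self_of_mem hA.eigenvectorUnitary.2, one_mulVec, one_mulVec] at this
  rw [this]
  simp only [dotProduct, sq]

theorem dotProduct_mulVec_le_iSup_eigenvalues_mul (hA : A.IsHermitian) (x : n → ℝ) :
    x ⬝ᵥ A *ᵥ x ≤ (⨆ i, hA.eigenvalues i) * (x ⬝ᵥ x) := by
  rw [hA.dotProduct_mulVec_eq_sum_eigenvalues_mul, hA.dotProduct_self_eq_sum_sq, mul_sum]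
  gcongr with i
  exact le_ciSup (Set.finite_range _).bddAbove i

theorem posSemidef_iSup_eigenvalues_smul_one_sub (hA : A.IsHermitian) :
    ((⨆ i, hA.eigenvalues i) • 1 - A).PosSemidef := by
  refine .of_dotProduct_mulVec_nonneg ((isHermitian_one.smul ?_).sub hA) fun x => ?_
  · exact IsSelfAdjoint.all _
  · rw [star_trivial, dotProduct_smul_one_sub_mulVec, sub_nonneg]
    exact hA.dotProduct_mulVec_le_iSup_eigenvalues_mul x

theorem mulVec_eq_iSup_eigenvalues_smul (hA : A.IsHermitian) {x : n → ℝ}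
    (hx : (⨆ i, hA.eigenvalues i) * (x ⬝ᵥ x) ≤ x ⬝ᵥ A *ᵥ x) :
    A *ᵥ x = (⨆ i, hA.eigenvalues i) • x := by
  have := (hA.posSemidef_iSup_eigenvalues_smul_one_sub.dotProduct_mulVec_zero_iff x).mp ?_
  · rwa [sub_mulVec, smul_mulVec, one_mulVec, sub_eq_zero, eq_comm] at this
  · rw [star_trivial, dotProduct_smul_one_sub_mulVec, sub_eq_zero]
    exact le_antisymm hx (hA.dotProduct_mulVec_le_iSup_eigenvalues_mul x)

end IsHermitian

end Matrix

namespace SimpleGraph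

variable {V : Type*} [Fintype V] (G : SimpleGraph V) [DecidableRel G.Adj]

theorem exists_isRegularOfDegree_iff :
    (∃ d, G.IsRegularOfDegree d) ↔ ∀ u v, G.degree u = G.degree v :=
  ⟨fun ⟨_, hd⟩ u v => by rw [hd.degree_eq, hd.degree_eq],
    fun h => (isEmpty_or_nonempty V).elim (fun _ => ⟨0, .of_isEmpty⟩)
      fun ⟨v⟩ => ⟨G.degree v, fun u => h u v⟩⟩

theorem trace_adjMatrix_sq {α : Type*} [Semiring α] [DecidableEq V] :
    ((G.adjMatrix α) ^ 2).trace = Fintype.card G.Dart := by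
  simp only [sq, trace, Matrix.diag, adjMatrix_mul_self_apply_self, dart_card_eq_sum_degrees,
    Nat.cast_sum]

variable {G}

theorem IsRegularOfDegree.adjMatrix_mulVec_one {α : Type*} [NonAssocSemiring α] {d : ℕ}
    (hd : G.IsRegularOfDegree d) : G.adjMatrix α *ᵥ 1 = (d : α) • 1 := by
  ext v
  simp [hd.degree_eq]

theorem norm_le_of_hasEigenvalue_adjMatrix {K : Type*} [NormedField K] [NormOneClass K]
    [DecidableEq V] {d : ℕ} (hG : ∀ v, G.degree v ≤ d) {μ : K}
    (hμ : Module.End.HasEigenvalue (toLin' (G.adjMatrix K)) μ) : ‖μ‖ ≤ d := by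
  obtain ⟨k, hk⟩ := eigenvalue_mem_ball hμ
  have hrow : ∑ j ∈ univ.erase k, ‖G.adjMatrix K k j‖ = G.degree k := by
    rw [sum_erase _ (by simp), ← card_neighborFinset_eq_degree, neighborFinset_eq_filter,
      card_filter]
    simp [adjMatrix_apply, apply_ite]
  rw [Metric.mem_closedBall, dist_eq_norm, adjMatrix_apply, if_neg (G.irrefl), sub_zero,
    hrow] at hk
  exact hk.trans (by exact_mod_cast hG k)

theorem IsRegularOfDegree.iSup_eigenvalues_le [DecidableEq V] {d : ℕ}
    (hd : G.IsRegularOfDegree d) (hA : (G.adjMatrix ℝ).IsHermitian) :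
    ⨆ i, hA.eigenvalues i ≤ d := by
  refine Real.iSup_le (fun i => ?_) d.cast_nonneg
  have hμ : Module.End.HasEigenvalue (toLin' (G.adjMatrix ℝ)) (hA.eigenvalues i) :=
    .of_mem_spectrum (by rw [spectrum_toLin']; exact hA.eigenvalues_mem_spectrum_real i)
  exact (le_abs_self _).trans (norm_le_of_hasEigenvalue_adjMatrix (fun v => (hd v).le) hμ)

end SimpleGraph

theorem regular_iff_sum_sq_eigenvalues_general {V : Type} [Fintype V] [DecidableEq V]
    (G : SimpleGraph V) [DecidableRel G.Adj] (n : ℕ)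
    (hcard : Fintype.card V = n) (hA : (G.adjMatrix ℝ).IsHermitian) :
    ((∃ d : ℕ, G.IsRegularOfDegree d) ↔
        (∑ i : V, hA.eigenvalues i ^ 2) = (n : ℝ) * (⨆ i : V, hA.eigenvalues i)) ∧
    ((∃ d : ℕ, G.IsRegularOfDegree d) ↔
        ((G.adjMatrix ℝ) ^ 2).trace = (n : ℝ) * (⨆ i : V, hA.eigenvalues i)) := by
  set μ₁ := ⨆ i, hA.eigenvalues i
  have hsq : ∑ i, hA.eigenvalues i ^ 2 = (G.adjMatrix ℝ ^ 2).trace := by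
    simpa using hA.trace_sq_eq_sum_sq_eigenvalues.symm
  have htrace : (G.adjMatrix ℝ ^ 2).trace = 1 ⬝ᵥ G.adjMatrix ℝ *ᵥ 1 := by
    rw [G.trace_adjMatrix_sq, G.natCast_card_dart_eq_dotProduct, dotProduct_comm]
  have hones : (1 : V → ℝ) ⬝ᵥ 1 = n := by simp [hcard]
  suffices h : (∃ d, G.IsRegularOfDegree d) ↔ 1 ⬝ᵥ G.adjMatrix ℝ *ᵥ 1 = μ₁ * (1 ⬝ᵥ 1) by
    rw [hsq, htrace, ← hones, mul_comm]
    exact ⟨h, h⟩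
  refine ⟨fun ⟨d, hd⟩ => le_antisymm (hA.dotProduct_mulVec_le_iSup_eigenvalues_mul 1) ?_,
    fun h => ?_⟩
  · calc μ₁ * (1 ⬝ᵥ 1) ≤ d * (1 ⬝ᵥ 1) := by
          gcongr
          · simp
          · exact hd.iSup_eigenvalues_le hA
      _ = 1 ⬝ᵥ G.adjMatrix ℝ *ᵥ 1 := by
          rw [hd.adjMatrix_mulVec_one, dotProduct_smul, smul_eq_mul]
  · have hdeg : ∀ v, (G.degree v : ℝ) = μ₁ := fun v => by
      simpa using congrFun (hA.mulVec_eq_iSup_eigenvalues_smul h.ge) v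
    exact G.exists_isRegularOfDegree_iff.mpr fun u v => by
      exact_mod_cast (hdeg u).trans (hdeg v).symm

/-- A graph's regularity is determined by its adjacency spectrum: for a graph `G` on
`n ≥ 1` vertices with (Hermitian) adjacency matrix `A` and largest eigenvalue `λ₁`,
`G` is regular iff the sum of the squares of the eigenvalues of `A` equals `n * λ₁`;
equivalently, `trace (A²) = n * λ₁`. -/
theorem regular_iff_sum_sq_eigenvalues {V : Type} [Fintype V] [DecidableEq V]
    (G : SimpleGraph V) [DecidableRel G.Adj] (n : ℕ) (hn : 1 ≤ n)
    (hcard : Fintype.card V = n) (hA : (G.adjMatrix ℝ).IsHermitian) :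
    ((∃ d : ℕ, G.IsRegularOfDegree d) ↔
        (∑ i : V, hA.eigenvalues i ^ 2) = (n : ℝ) * (⨆ i : V, hA.eigenvalues i)) ∧
    ((∃ d : ℕ, G.IsRegularOfDegree d) ↔
        ((G.adjMatrix ℝ) ^ 2).trace = (n : ℝ) * (⨆ i : V, hA.eigenvalues i)) :=
  regular_iff_sum_sq_eigenvalues_general G n hcard hA
end

section
/- Seidel switching of a regular graph into a regular graph preserves the adjacency spectrum: let V be a finite vertex type, U ⊆ V, and let G and H be simple graphs on V such that (i) for all u, v with u ∈ U ↔ v ∈ U (both inside or both outside U), u and v are adjacent in H iff they are adjacent in G, and (ii) for all u ∈ U and v ∉ U, u and v are adjacent in H iff they are not adjacent in G. If G and H are both d-regular for the same d, then the adjacency matrices of G and H have equal characteristic polynomials over ℝ. -/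
open Polynomial

/-- Conjugation by an involution preserves the characteristic polynomial. -/
lemma charpoly_conj_involution {V : Type} [Fintype V] [DecidableEq V]
    (P A : Matrix V V ℝ) (hP : P * P = 1) :
    (P * A * P).charpoly = A.charpoly := by
  let P' : Matrix V V ℝ[X] := (C : ℝ →+* ℝ[X]).mapMatrix P
  have hP' : P' * P' = 1 := by
    simp only [P', ← map_mul, hP, map_one]
  have hcomm : Matrix.scalar V (X : ℝ[X]) * P' = P' * Matrix.scalar V (X : ℝ[X]) :=
    (Matrix.scalar_commute (X : ℝ[X]) (fun r' => Commute.all _ _) P').eq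
  have hchar : Matrix.charmatrix (P * A * P) = P' * Matrix.charmatrix A * P' := by
    unfold Matrix.charmatrix
    rw [Matrix.mul_sub, Matrix.sub_mul]
    congr 1
    · rw [← hcomm, Matrix.mul_assoc, hP', Matrix.mul_one]
    · simp only [P', RingHom.mapMatrix_apply, ← Matrix.map_mul]
  have hdet := congrArg Matrix.det hchar
  rw [Matrix.det_mul, Matrix.det_mul] at hdet
  calc (P * A * P).charpoly = P'.det * (Matrix.charmatrix A).det * P'.det := hdet
    _ = P'.det * P'.det * (Matrix.charmatrix A).det := by ring
    _ = (P' * P').det * (Matrix.charmatrix A).det := by rw [Matrix.det_mul]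
    _ = A.charpoly := by rw [hP', Matrix.det_one, one_mul]; rfl

lemma row_sum_regular {V : Type} [Fintype V] [DecidableEq V] (G : SimpleGraph V)
    [DecidableRel G.Adj] (d : ℕ) (h : G.IsRegularOfDegree d) (v : V) :
    (∑ x, G.adjMatrix ℝ v x) = (d : ℝ) := by
  have h' := SimpleGraph.adjMatrix_mulVec_const_apply_of_regular (α := ℝ) (d := d)
    (G := G) h (v := v) (a := 1)
  simpa [Matrix.mulVec, dotProduct] using h'

set_option maxHeartbeats 2000000 in
/-- Seidel switching of a regular graph into a regular graph preserves the adjacency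
spectrum: if `H` is obtained from `G` by Seidel switching with respect to `U` (adjacency
is kept inside `U` and outside `U`, and complemented between `U` and its complement), and
both `G` and `H` are `d`-regular, then `G` and `H` are `A`-cospectral. -/
theorem seidel_switching_cospectral {V : Type} [Fintype V] [DecidableEq V]
    (U : Set V) (G H : SimpleGraph V) [DecidableRel G.Adj] [DecidableRel H.Adj] (d : ℕ)
    (h1 : ∀ u v : V, (u ∈ U ↔ v ∈ U) → (H.Adj u v ↔ G.Adj u v))
    (h2 : ∀ u v : V, u ∈ U → v ∉ U → (H.Adj u v ↔ ¬ G.Adj u v))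
    (hG : G.IsRegularOfDegree d) (hH : H.IsRegularOfDegree d) :
    (G.adjMatrix ℝ).charpoly = (H.adjMatrix ℝ).charpoly := by
  classical
  by_cases hU : ∀ v : V, v ∈ U
  · have : G.adjMatrix ℝ = H.adjMatrix ℝ := by
      ext u v
      simp only [SimpleGraph.adjMatrix_apply, h1 u v ⟨fun _ => hU v, fun _ => hU u⟩]
    rw [this]
  push_neg at hU
  obtain ⟨v₀, hv₀⟩ := hU
  set A : Matrix V V ℝ := G.adjMatrix ℝ with hA
  set B : Matrix V V ℝ := H.adjMatrix ℝ with hB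
  -- entrywise relations between A and B
  have hBA_in : ∀ v w : V, v ∈ U → w ∈ U → B v w = A v w := by
    intro v w hv hw
    simp only [hA, hB, SimpleGraph.adjMatrix_apply]
    simp only [h1 v w ⟨fun _ => hw, fun _ => hv⟩]
  have hBA_out : ∀ v w : V, v ∉ U → w ∉ U → B v w = A v w := by
    intro v w hv hw
    simp only [hA, hB, SimpleGraph.adjMatrix_apply]
    simp only [h1 v w ⟨fun h => absurd h hv, fun h => absurd h hw⟩]
  have hBA_cross : ∀ v w : V, v ∈ U → w ∉ U → B v w = 1 - A v w := by
    intro v w hv hw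
    simp only [hA, hB, SimpleGraph.adjMatrix_apply]
    by_cases h : G.Adj v w
    · simp [h, (h2 v w hv hw).mpr, not_not_intro h, h2 v w hv hw]
    · simp [h, (h2 v w hv hw).mpr h]
  have hBA_cross' : ∀ v w : V, v ∉ U → w ∈ U → B v w = 1 - A v w := by
    intro v w hv hw
    have hsB : B v w = B w v := by
      simp only [hB, SimpleGraph.adjMatrix_apply, H.adj_comm]
    have hsA : A v w = A w v := by
      simp only [hA, SimpleGraph.adjMatrix_apply, G.adj_comm]
    rw [hsB, hBA_cross w v hw hv, hsA]
  have hAsymm : ∀ v w : V, A v w = A w v := by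
    intro v w
    simp only [hA, SimpleGraph.adjMatrix_apply, G.adj_comm]
  -- sums over U and its complement
  set SU : Finset V := Finset.univ.filter (· ∈ U) with hSU
  set SC : Finset V := Finset.univ.filter (· ∉ U) with hSC
  set k : ℝ := (SU.card : ℝ) with hk
  set m : ℝ := (SC.card : ℝ) with hm
  have hm0 : m ≠ 0 := by
    have h1' : v₀ ∈ SC := by simp [hSC, hv₀]
    have h2' : 0 < SC.card := Finset.card_pos.mpr ⟨v₀, h1'⟩
    simp only [hm]
    positivity
  have hsplit : ∀ (M : Matrix V V ℝ) (v : V),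
      (∑ x ∈ SU, M v x) + (∑ x ∈ SC, M v x) = ∑ x, M v x := by
    intro M v
    rw [hSU, hSC]
    exact Finset.sum_filter_add_sum_filter_not _ _ _
  have hrowA : ∀ v : V, (∑ x, A v x) = (d : ℝ) := fun v => row_sum_regular G d hG v
  have hrowB : ∀ v : V, (∑ x, B v x) = (d : ℝ) := fun v => row_sum_regular H d hH v
  -- the four key sum facts
  have hcA_in : ∀ v ∈ U, (∑ x ∈ SC, A v x) = m / 2 := by
    intro v hv
    have e1 := hsplit A v; rw [hrowA v] at e1
    have e2 := hsplit B v; rw [hrowB v] at e2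
    have hbu : (∑ x ∈ SU, B v x) = ∑ x ∈ SU, A v x := by
      apply Finset.sum_congr rfl
      intro x hx
      rw [hSU, Finset.mem_filter] at hx
      exact hBA_in v x hv hx.2
    have hbc : (∑ x ∈ SC, B v x) = m - ∑ x ∈ SC, A v x := by
      have : (∑ x ∈ SC, B v x) = ∑ x ∈ SC, (1 - A v x) := by
        apply Finset.sum_congr rfl
        intro x hx
        rw [hSC, Finset.mem_filter] at hx
        exact hBA_cross v x hv hx.2
      rw [this, Finset.sum_sub_distrib, Finset.sum_const, nsmul_eq_mul, mul_one, hm]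
    rw [hbu, hbc] at e2
    linarith
  have hcB_in : ∀ v ∈ U, (∑ x ∈ SC, B v x) = m / 2 := by
    intro v hv
    have : (∑ x ∈ SC, B v x) = ∑ x ∈ SC, (1 - A v x) := by
      apply Finset.sum_congr rfl
      intro x hx
      rw [hSC, Finset.mem_filter] at hx
      exact hBA_cross v x hv hx.2
    rw [this, Finset.sum_sub_distrib, Finset.sum_const, nsmul_eq_mul, mul_one, ← hm,
      hcA_in v hv]
    ring
  have hcBA_out : ∀ v, v ∉ U → (∑ x ∈ SC, B v x) = ∑ x ∈ SC, A v x := by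
    intro v hv
    apply Finset.sum_congr rfl
    intro x hx
    rw [hSC, Finset.mem_filter] at hx
    exact hBA_out v x hv hx.2
  have hcA_out : ∀ v, v ∉ U → (∑ x ∈ SC, A v x) = (d : ℝ) - k / 2 := by
    intro v hv
    have e1 := hsplit A v; rw [hrowA v] at e1
    have e2 := hsplit B v; rw [hrowB v] at e2
    have hbu : (∑ x ∈ SU, B v x) = k - ∑ x ∈ SU, A v x := by
      have : (∑ x ∈ SU, B v x) = ∑ x ∈ SU, (1 - A v x) := by
        apply Finset.sum_congr rfl
        intro x hx
        rw [hSU, Finset.mem_filter] at hx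
        exact hBA_cross' v x hv hx.2
      rw [this, Finset.sum_sub_distrib, Finset.sum_const, nsmul_eq_mul, mul_one, hk]
    rw [hbu, hcBA_out v hv] at e2
    linarith
  have hcB_out : ∀ v, v ∉ U → (∑ x ∈ SC, B v x) = (d : ℝ) - k / 2 := by
    intro v hv
    rw [hcBA_out v hv]
    exact hcA_out v hv
  -- the switching matrix
  set χ : V → ℝ := fun v => if v ∉ U then 1 else 0 with hχ
  set ε : V → ℝ := fun v => if v ∈ U then 1 else -1 with hε
  set P : Matrix V V ℝ := Matrix.diagonal ε + (2 / m) • Matrix.vecMulVec χ χ with hP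
  have hχsum : (∑ x, χ x) = m := by
    simp only [hχ]
    rw [Finset.sum_boole, hm, hSC]
  have hεχ : ∀ v, ε v * χ v = -χ v := by
    intro v
    by_cases h : v ∈ U <;> simp [hε, hχ, h]
  have hχε : ∀ v, χ v * ε v = -χ v := by
    intro v
    by_cases h : v ∈ U <;> simp [hε, hχ, h]
  have hχχ : ∀ v, χ v * χ v = χ v := by
    intro v
    by_cases h : v ∈ U <;> simp [hχ, h]
  have hεε : ∀ v, ε v * ε v = 1 := by
    intro v
    by_cases h : v ∈ U <;> simp [hε, h]
  -- P is an involution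
  have hPP : P * P = 1 := by
    rw [hP, Matrix.add_mul, Matrix.mul_add, Matrix.mul_add]
    rw [Matrix.diagonal_mul_diagonal]
    have h1' : Matrix.diagonal (fun i => ε i * ε i) = (1 : Matrix V V ℝ) := by
      rw [show (fun i => ε i * ε i) = fun _ => (1:ℝ) from funext hεε, Matrix.diagonal_one]
    have hDN : Matrix.diagonal ε * Matrix.vecMulVec χ χ = -Matrix.vecMulVec χ χ := by
      ext v w
      simp only [Matrix.diagonal_mul, Matrix.neg_apply, Matrix.vecMulVec_apply]
      rw [← mul_assoc, hεχ v, neg_mul]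
    have hND : Matrix.vecMulVec χ χ * Matrix.diagonal ε = -Matrix.vecMulVec χ χ := by
      ext v w
      simp only [Matrix.mul_diagonal, Matrix.neg_apply, Matrix.vecMulVec_apply]
      rw [mul_assoc, hχε w, mul_neg]
    have hNN : Matrix.vecMulVec χ χ * Matrix.vecMulVec χ χ = m • Matrix.vecMulVec χ χ := by
      ext v w
      simp only [Matrix.mul_apply, Matrix.smul_apply, Matrix.vecMulVec_apply, smul_eq_mul]
      have heach : ∀ x : V, χ v * χ x * (χ x * χ w)
          = χ v * χ w * χ x := by
        intro x
        have h' := hχχ x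
        calc χ v * χ x * (χ x * χ w) = (χ v * χ w) * (χ x * χ x) := by ring
          _ = χ v * χ w * χ x := by rw [h']
      rw [Finset.sum_congr rfl fun x _ => heach x, ← Finset.mul_sum, hχsum]
      ring
    rw [h1', Matrix.mul_smul, hDN, Matrix.smul_mul, hND, Matrix.mul_smul, Matrix.smul_mul,
      hNN]
    have hfin : (2 / m) • (2 / m) • m • Matrix.vecMulVec χ χ
        = ((2 / m) + (2 / m)) • Matrix.vecMulVec χ χ := by
      rw [smul_smul, smul_smul]
      congr 1
      field_simp
      ring
    rw [hfin, add_smul]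
    module
  -- the intertwining relation P * A = B * P
  have hPA : P * A = B * P := by
    have hNA : ∀ v w, (Matrix.vecMulVec χ χ * A) v w = χ v * (∑ x ∈ SC, A w x) := by
      intro v w
      rw [Matrix.mul_apply]
      have : ∀ x, Matrix.vecMulVec χ χ v x * A x w = χ v * (if x ∉ U then A w x else 0) := by
        intro x
        simp only [Matrix.vecMulVec_apply]
        rw [hAsymm x w]
        by_cases h : x ∈ U <;> simp [hχ, h] <;> ring
      rw [Finset.sum_congr rfl fun x _ => this x, ← Finset.mul_sum]
      congr 1
      rw [hSC, Finset.sum_filter]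
    have hBN : ∀ v w, (B * Matrix.vecMulVec χ χ) v w = χ w * (∑ x ∈ SC, B v x) := by
      intro v w
      rw [Matrix.mul_apply]
      have : ∀ x, B v x * Matrix.vecMulVec χ χ x w = χ w * (if x ∉ U then B v x else 0) := by
        intro x
        simp only [Matrix.vecMulVec_apply]
        by_cases h : x ∈ U <;> simp [hχ, h] <;> ring
      rw [Finset.sum_congr rfl fun x _ => this x, ← Finset.mul_sum]
      congr 1
      rw [hSC, Finset.sum_filter]
    ext v w
    rw [hP, Matrix.add_mul, Matrix.mul_add, Matrix.add_apply, Matrix.add_apply,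
      Matrix.smul_mul, Matrix.mul_smul, Matrix.smul_apply, Matrix.smul_apply,
      hNA v w, hBN v w, Matrix.diagonal_mul, Matrix.mul_diagonal, smul_eq_mul, smul_eq_mul]
    by_cases hv : v ∈ U <;> by_cases hw : w ∈ U
    · rw [hBA_in v w hv hw]
      simp only [hε, hχ]
      rw [if_pos hv, if_pos hw, if_neg (not_not_intro hv), if_neg (not_not_intro hw)]
      ring
    · rw [hBA_cross v w hv hw, hcB_in v hv]
      simp only [hε, hχ]
      rw [if_pos hv, if_neg hw, if_neg (not_not_intro hv), if_pos hw]
      field_simp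
      try ring
    · rw [hBA_cross' v w hv hw, hcA_in w hw]
      simp only [hε, hχ]
      rw [if_neg hv, if_pos hw, if_pos hv, if_neg (not_not_intro hw)]
      field_simp
      try ring
    · rw [hBA_out v w hv hw, hcB_out v hv, hcA_out w hw]
      simp only [hε, hχ]
      rw [if_neg hv, if_neg hw, if_pos hv, if_pos hw]
      ring
  -- conclude
  have hBPAP : B = P * A * P := by
    rw [hPA, Matrix.mul_assoc, hPP, Matrix.mul_one]
  rw [hBPAP, charpoly_conj_involution P A hPP]
end
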